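/- arXiv:2207.12590 — 6 statements merged into one kernel-verified Lean document; each statement's English description precedes it below -/
import Mathlib

section
/- Let λ/μ be a skew partition (i.e., μ_i ≤ λ_i for all i). Then n(λ) − n(μ) − binomial(|λ|−|μ|, 2) = Σ_{1 ≤ i ≤ j} (λ_i − μ_i)(μ_j − λ_{j+1}). -/
private lemma two_choose_two (n : ℕ) : 2 * (n.choose 2 : ℤ) = n * (n - 1) := by
  induction n with
  | zero => simp
  | succ k ih =>
    rw [Nat.choose_succ_succ, Nat.choose_one_right]
    push_cast
    push_cast at ih
    ring_nf
    ring_nf at ih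
    linarith

private lemma key_ident (lam mu : ℕ → ℤ) (m : ℕ) :
    (∑ i ∈ Finset.range m, (lam i * (lam i - 1) - mu i * (mu i - 1)))
      - (∑ i ∈ Finset.range m, (lam i - mu i)) *
        ((∑ i ∈ Finset.range m, (lam i - mu i)) - 1)
    = 2 * ∑ j ∈ Finset.range m, ∑ i ∈ Finset.range (j + 1),
        (lam i - mu i) * (mu j - lam (j + 1))
      + 2 * (∑ i ∈ Finset.range m, (lam i - mu i)) * lam m := by
  induction m with
  | zero => simp
  | succ k ih =>
    rw [Finset.sum_range_succ, Finset.sum_range_succ (f := fun i => lam i - mu i),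
      Finset.sum_range_succ (f := fun j => ∑ i ∈ Finset.range (j + 1),
        (lam i - mu i) * (mu j - lam (j + 1))),
      Finset.sum_range_succ (f := fun i => (lam i - mu i) * (mu k - lam (k + 1))),
      ← Finset.sum_mul]
    linear_combination ih

/-- Let `λ/μ` be a skew partition (`μ_i ≤ λ_i` for all `i`).  Then
`n(λ) − n(μ) − C(|λ|−|μ|, 2) = ∑_{1 ≤ i ≤ j} (λ_i − μ_i)(μ_j − λ_{j+1})`.
Partitions are encoded as antitone functions `ℕ → ℕ` (0-indexed parts) vanishing
from index `m` on; all sums are over the (sufficient) range `m`. -/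
theorem stmt_1 (m : ℕ) (lam mu : ℕ → ℕ)
    (hlam : ∀ i, lam (i + 1) ≤ lam i) (hmu : ∀ i, mu (i + 1) ≤ mu i)
    (hsub : ∀ i, mu i ≤ lam i) (hsupp : ∀ i, m ≤ i → lam i = 0) :
    ((∑ i ∈ Finset.range m, Nat.choose (lam i) 2 : ℕ) : ℤ)
      - (∑ i ∈ Finset.range m, Nat.choose (mu i) 2 : ℕ)
      - (Nat.choose ((∑ i ∈ Finset.range m, lam i) - (∑ i ∈ Finset.range m, mu i)) 2 : ℕ)
    = ∑ j ∈ Finset.range m, ∑ i ∈ Finset.range (j + 1),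
        ((lam i : ℤ) - mu i) * ((mu j : ℤ) - lam (j + 1)) := by
  have hle : (∑ i ∈ Finset.range m, mu i) ≤ ∑ i ∈ Finset.range m, lam i :=
    Finset.sum_le_sum fun i _ => hsub i
  have key := key_ident (fun i => (lam i : ℤ)) (fun i => (mu i : ℤ)) m
  have hlm : ((lam m : ℕ) : ℤ) = 0 := by rw [hsupp m le_rfl]; simp
  apply mul_left_cancel₀ (two_ne_zero (α := ℤ))
  have h1 : 2 * ((∑ i ∈ Finset.range m, Nat.choose (lam i) 2 : ℕ) : ℤ)
      = ∑ i ∈ Finset.range m, (lam i : ℤ) * ((lam i : ℤ) - 1) := by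
    push_cast
    rw [Finset.mul_sum]
    exact Finset.sum_congr rfl fun i _ => two_choose_two (lam i)
  have h2 : 2 * ((∑ i ∈ Finset.range m, Nat.choose (mu i) 2 : ℕ) : ℤ)
      = ∑ i ∈ Finset.range m, (mu i : ℤ) * ((mu i : ℤ) - 1) := by
    push_cast
    rw [Finset.mul_sum]
    exact Finset.sum_congr rfl fun i _ => two_choose_two (mu i)
  have h3 : 2 * ((Nat.choose ((∑ i ∈ Finset.range m, lam i)
        - (∑ i ∈ Finset.range m, mu i)) 2 : ℕ) : ℤ)
      = (∑ i ∈ Finset.range m, ((lam i : ℤ) - mu i)) *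
        ((∑ i ∈ Finset.range m, ((lam i : ℤ) - mu i)) - 1) := by
    rw [two_choose_two]
    rw [Nat.cast_sub hle]
    rw [Finset.sum_sub_distrib]
    push_cast
    ring
  rw [mul_sub, mul_sub, h1, h2, h3]
  simp only [hlm, mul_zero] at key
  rw [Finset.sum_sub_distrib] at key
  linarith [key]
end

section
/- Let N be a nilpotent endomorphism of a finite-dimensional vector space V with conjugated Jordan form partition λ, and let W be a subspace of V with N(V) ⊆ W. Let μ be the conjugated Jordan form partition of N restricted to W. Then μ ⊆ λ and λ/μ is a horizontal strip, i.e., λ_i ≥ μ_i ≥ λ_{i+1} for all i ≥ 1. -/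
open Module Submodule LinearMap

private lemma aux_modular {k V : Type*} [Field k] [AddCommGroup V] [Module k V]
    [FiniteDimensional k V] {P Q R : Submodule k V} (hPQ : P ≤ Q) :
    finrank k ↥(Q ⊓ R) + finrank k ↥P ≤ finrank k ↥Q + finrank k ↥(P ⊓ R) := by
  have h := Submodule.finrank_sup_add_finrank_inf_eq (Q ⊓ R) P
  have h2 : (Q ⊓ R) ⊓ P = P ⊓ R := by
    rw [inf_comm, ← inf_assoc, inf_eq_left.mpr hPQ]
  have h1 : finrank k ↥((Q ⊓ R) ⊔ P) ≤ finrank k ↥Q :=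
    Submodule.finrank_mono (sup_le inf_le_left hPQ)
  rw [h2] at h
  omega

private lemma aux_comap {k V : Type*} [Field k] [AddCommGroup V] [Module k V]
    [FiniteDimensional k V] (f : V →ₗ[k] V) (S : Submodule k V) :
    finrank k ↥(S.comap f) = finrank k ↥(S ⊓ LinearMap.range f) + finrank k ↥(LinearMap.ker f) := by
  have h := (f.domRestrict (S.comap f)).finrank_range_add_finrank_ker
  have hrange : LinearMap.range (f.domRestrict (S.comap f)) = S ⊓ LinearMap.range f := by
    rw [range_domRestrict, Submodule.map_comap_eq, inf_comm]
  have hker : finrank k ↥(LinearMap.ker (f.domRestrict (S.comap f)))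
      = finrank k ↥(LinearMap.ker f) := by
    rw [ker_domRestrict, ← Submodule.finrank_map_subtype_eq (S.comap f), map_comap_subtype,
      inf_eq_right.mpr]
    intro x hx
    simp_all [LinearMap.mem_ker.mp hx]
  rw [hrange, hker] at h
  omega

/-- Let `N` be a nilpotent endomorphism of a finite-dimensional vector space `V` with
conjugated Jordan form partition `λ` (characterized by `λ_1 + ... + λ_i = dim ker N^i`),
and let `W` be a subspace with `N(V) ⊆ W`.  Let `μ` be the conjugated Jordan form
partition of `N` restricted to `W`.  Then `μ ⊆ λ` and `λ/μ` is a horizontal strip,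
i.e. `λ_i ≥ μ_i ≥ λ_{i+1}` for all `i ≥ 1`.  (Parts are 0-indexed here:
`λ_i = lam (i-1)`.) -/
theorem stmt_3 (k : Type*) [Field k] (V : Type*) [AddCommGroup V] [Module k V]
    [FiniteDimensional k V] (N : V →ₗ[k] V) (hN : IsNilpotent N)
    (W : Submodule k V) (hNW : ∀ x : V, N x ∈ W)
    (lam mu : ℕ → ℕ)
    (hlam : ∀ i, ∑ r ∈ Finset.range i, lam r = Module.finrank k (LinearMap.ker (N ^ i)))
    (hmu : ∀ i, ∑ r ∈ Finset.range i, mu r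
      = Module.finrank k (LinearMap.ker ((N.restrict (p := W) (q := W) (fun x _ => hNW x)) ^ i))) :
    ∀ i, mu i ≤ lam i ∧ lam (i + 1) ≤ mu i := by
  set a : ℕ → ℕ := fun i => finrank k ↥(LinearMap.ker (N ^ i)) with ha
  set b : ℕ → ℕ := fun i => finrank k ↥(W ⊓ LinearMap.ker (N ^ i)) with hb
  -- μ partial sums equal b
  have hbmu : ∀ i, ∑ r ∈ Finset.range i, mu r = b i := by
    intro i
    rw [hmu i, Module.End.pow_restrict, ker_restrict, hb,
      ← Submodule.finrank_map_subtype_eq W, map_comap_subtype]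
  have hstep_a : ∀ i, a i + lam i = a (i + 1) := by
    intro i
    have h1 := hlam i; have h2 := hlam (i + 1)
    rw [Finset.sum_range_succ, h1] at h2
    exact h2
  have hstep_b : ∀ i, b i + mu i = b (i + 1) := by
    intro i
    have h1 := hbmu i; have h2 := hbmu (i + 1)
    rw [Finset.sum_range_succ, h1] at h2
    exact h2
  have hker_mono : ∀ i, LinearMap.ker (N ^ i) ≤ LinearMap.ker (N ^ (i + 1)) := by
    intro i x hx
    rw [LinearMap.mem_ker] at hx ⊢
    rw [pow_succ', Module.End.mul_apply, hx, map_zero]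
  -- key: ker N^(i+1) = comap N (W ⊓ ker N^i)
  have hcomap : ∀ i, LinearMap.ker (N ^ (i + 1)) = (W ⊓ LinearMap.ker (N ^ i)).comap N := by
    intro i
    ext x
    simp only [LinearMap.mem_ker, Submodule.mem_comap, Submodule.mem_inf]
    constructor
    · intro hx
      refine ⟨hNW x, ?_⟩
      rw [← Module.End.mul_apply, ← pow_succ]
      exact hx
    · rintro ⟨-, hx⟩
      rw [← Module.End.mul_apply, ← pow_succ] at hx
      exact hx
  intro i
  -- claim A : b (i+1) + a i ≤ a (i+1) + b i
  have hA : b (i + 1) + a i ≤ a (i + 1) + b i := by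
    have h := aux_modular (R := W) (hker_mono i)
    rw [inf_comm (LinearMap.ker (N ^ (i + 1))) W,
      inf_comm (LinearMap.ker (N ^ i)) W] at h
    exact h
  -- claim B : a (i+2) + b i ≤ a (i+1) + b (i+1)
  have hB : a (i + 2) + b i ≤ a (i + 1) + b (i + 1) := by
    have hWmono : W ⊓ LinearMap.ker (N ^ i) ≤ W ⊓ LinearMap.ker (N ^ (i + 1)) :=
      inf_le_inf_left W (hker_mono i)
    have h := aux_modular (R := LinearMap.range N) hWmono
    have e1 : a (i + 2) = finrank k ↥((W ⊓ LinearMap.ker (N ^ (i + 1))) ⊓ LinearMap.range N)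
        + finrank k ↥(LinearMap.ker N) := by
      rw [ha]; show finrank k ↥(LinearMap.ker (N ^ (i + 1 + 1))) = _
      rw [hcomap (i + 1), aux_comap]
    have e2 : a (i + 1) = finrank k ↥((W ⊓ LinearMap.ker (N ^ i)) ⊓ LinearMap.range N)
        + finrank k ↥(LinearMap.ker N) := by
      rw [ha]; show finrank k ↥(LinearMap.ker (N ^ (i + 1))) = _
      rw [hcomap i, aux_comap]
    simp only [hb] at h ⊢
    omega
  have h1 := hstep_a i
  have h2 : a (i + 1) + lam (i + 1) = a (i + 2) := hstep_a (i + 1)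
  have h3 := hstep_b i
  constructor <;> omega
end

section
/- Let λ/μ be a horizontal strip, and let N be a nilpotent endomorphism of F_q^n with conjugated Jordan form partition λ. Then the number of subspaces V ⊆ F_q^n such that N(F_q^n) ⊆ V and the conjugated Jordan form partition of N restricted to V is μ equals ∏_{1 ≤ i < j} q^{(λ_i − μ_i)(μ_j − λ_{j+1})} · ∏_{i ≥ 1} binomial(λ_i − λ_{i+1}, μ_i − λ_{i+1})_q. -/
/-!
Write `R = range N` and `K d = ker (N ^ d)`. For `V ⊇ R` the modular law gives
`dim (V ⊓ (R ⊔ K d)) + dim K (d + 1) = dim (V ⊓ K d) + n`, so the condition on `V` prescribes the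
dimensions of `V ⊓ W d` along the flag `W d = R ⊔ K d`, which runs from `W 0 = R` to `W n = F^n`.
Such subspaces are counted one step of the flag at a time: given `V' = V ⊓ W d`, the subspaces
`V ≤ W (d + 1)` with `V ⊓ W d = V'` and `dim V = m` correspond, modulo `V'`, to subspaces of
dimension `m - dim V'` meeting `W d / V'` trivially, i.e. to graphs of linear maps into `W d / V'`
defined on subspaces of a complement. There are `q ^ ((dim W d - dim V') * (m - dim V'))` times
`[dim W (d + 1) - dim W d choose m - dim V']_q` of them.
-/

open Module LinearMap Submodule

/-- The Gaussian binomial coefficient `[k choose c]_q`, `q = |F|`. -/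
noncomputable def grassmannianCard (F : Type*) [Field F] (k c : ℕ) : ℕ :=
  Nat.card {U : Submodule F (Fin k → F) // finrank F U = c}

theorem Nat.card_sigma_of_card_eq {α : Type*} {β : α → Type*} [Finite α] [∀ a, Finite (β a)]
    {k : ℕ} (h : ∀ a, Nat.card (β a) = k) : Nat.card (Σ a, β a) = Nat.card α * k := by
  have := Fintype.ofFinite α
  simp [Nat.card_sigma, h, Nat.card_eq_fintype_card]

section Counting
variable {F E G Z : Type*} [Field F] [AddCommGroup E] [Module F E] [AddCommGroup G] [Module F G]
  [AddCommGroup Z] [Module F Z]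

theorem finrank_map_add_finrank_inf_ker [FiniteDimensional F E] (f : E →ₗ[F] G)
    (p : Submodule F E) :
    finrank F (p.map f) + finrank F (p ⊓ ker f : Submodule F E) = finrank F p := by
  have h := LinearMap.finrank_range_add_finrank_ker (f.domRestrict p)
  rwa [LinearMap.range_domRestrict, LinearMap.ker_domRestrict, ← finrank_map_subtype_eq,
    map_comap_subtype] at h

theorem card_submodule_finrank_eq_grassmannianCard [FiniteDimensional F E] {k : ℕ}
    (hk : finrank F E = k) (c : ℕ) :
    Nat.card {U : Submodule F E // finrank F U = c} = grassmannianCard F k c := by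
  let e : E ≃ₗ[F] (Fin k → F) := LinearEquiv.ofFinrankEq _ _ (by simp [hk])
  exact Nat.card_congr <| (orderIsoMapComap e).toEquiv.subtypeEquiv fun U => by
    change _ ↔ finrank F (U.map (e : E →ₗ[F] Fin k → F)) = c
    rw [e.finrank_map_eq]

def schubertCell (W : ℕ → Submodule F Z) (b : ℕ → ℕ) (n : ℕ) : Set (Submodule F Z) :=
  {V | V ≤ W n ∧ ∀ d ≤ n, finrank F (V ⊓ W d : Submodule F Z) = b d}

theorem card_schubertCell_zero [FiniteDimensional F Z] {W : ℕ → Submodule F Z} {b : ℕ → ℕ}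
    (hb0 : b 0 = finrank F (W 0)) : Nat.card (schubertCell W b 0) = 1 := by
  have eq_W0 (V : schubertCell W b 0) : V.1 = W 0 :=
    eq_of_le_of_finrank_eq V.2.1 (by rw [← inf_eq_left.2 V.2.1, V.2.2 0 le_rfl, hb0])
  refine Nat.card_eq_one_iff_unique.2
    ⟨⟨fun V₁ V₂ => Subtype.ext ((eq_W0 V₁).trans (eq_W0 V₂).symm)⟩, ⟨⟨W 0, le_rfl, fun d hd => ?_⟩⟩⟩
  rw [Nat.le_zero.1 hd, inf_idem, hb0]

variable [Fintype F] [FiniteDimensional F E] [FiniteDimensional F G] [FiniteDimensional F Z]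
  {W : ℕ → Submodule F Z}

instance : Finite (Submodule F E) :=
  have : Finite E := Module.finite_of_finite F
  inferInstance

theorem card_linearMap : Nat.card (E →ₗ[F] G) = Fintype.card F ^ (finrank F E * finrank F G) := by
  rw [Module.natCard_eq_pow_finrank (K := F), Module.finrank_linearMap, Nat.card_eq_fintype_card]

theorem card_graph_finrank_eq (c : ℕ) :
    Nat.card {g : Submodule F (E × G) // (∀ x ∈ g, x.1 = 0 → x.2 = 0) ∧ finrank F g = c}
      = Nat.card {U : Submodule F E // finrank F U = c} * Fintype.card F ^ (c * finrank F G) := by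
  have finrank_map_fst {g : Submodule F (E × G)} (hg : ∀ x ∈ g, x.1 = 0 → x.2 = 0) :
      finrank F (g.map (fst F E G)) = finrank F g := by
    have hker : g ⊓ ker (fst F E G) = ⊥ :=
      eq_bot_iff.2 fun x ⟨hx, hx1⟩ => Prod.ext hx1 (hg x hx hx1)
    have := finrank_map_add_finrank_inf_ker (fst F E G) g
    rwa [hker, finrank_bot, add_zero] at this
  have isGraph_graph (f : E →ₗ.[F] G) : ∀ x ∈ f.graph, x.1 = 0 → x.2 = 0 :=
    fun _ hx hx1 => f.graph_fst_eq_zero_snd hx hx1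
  have graphs : {g : Submodule F (E × G) // (∀ x ∈ g, x.1 = 0 → x.2 = 0) ∧ finrank F g = c} ≃
      {f : E →ₗ.[F] G // finrank F f.domain = c} :=
    { toFun g := ⟨g.1.toLinearPMap, (finrank_map_fst g.2.1).trans g.2.2⟩
      invFun f := ⟨f.1.graph, isGraph_graph f.1, by
        rw [← finrank_map_fst (isGraph_graph f.1), f.1.graph_map_fst_eq_domain, f.2]⟩
      left_inv g := Subtype.ext (g.1.toLinearPMap_graph_eq g.2.1)
      right_inv f := Subtype.ext (LinearPMap.eq_of_eq_graph
        (f.1.graph.toLinearPMap_graph_eq (isGraph_graph f.1))) }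
  have domains : {f : E →ₗ.[F] G // finrank F f.domain = c} ≃
      Σ U : {U : Submodule F E // finrank F U = c}, (U →ₗ[F] G) :=
    { toFun f := ⟨⟨f.1.domain, f.2⟩, f.1.toFun⟩
      invFun p := ⟨⟨p.1.1, p.2⟩, p.1.2⟩
      left_inv _ := rfl
      right_inv _ := rfl }
  have (U : Submodule F E) : Finite (U →ₗ[F] G) := Module.finite_of_finite F
  rw [Nat.card_congr (graphs.trans domains)]
  exact Nat.card_sigma_of_card_eq fun U => by rw [card_linearMap, U.2]

theorem card_inf_eq_bot_finrank_eq (Y : Submodule F Z) (c : ℕ) :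
    Nat.card {W : Submodule F Z // W ⊓ Y = ⊥ ∧ finrank F W = c}
      = Fintype.card F ^ (finrank F Y * c) * grassmannianCard F (finrank F Z - finrank F Y) c := by
  obtain ⟨C, hC⟩ := Y.exists_isCompl
  let e := prodEquivOfIsCompl C Y hC.symm
  have hgraph (g : Submodule F (C × Y)) :
      (∀ x ∈ g, x.1 = 0 → x.2 = 0) ↔ g.map (e : C × Y →ₗ[F] Z) ⊓ Y = ⊥ := by
    refine ⟨fun hg => eq_bot_iff.2 ?_, fun hg x hx hx1 => ?_⟩
    · rintro _ ⟨⟨x, hx, rfl⟩, hxY⟩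
      have hx1 : x.1 = 0 := by
        rw [← LinearEquiv.symm_apply_apply e x]
        exact congrArg Prod.fst (prodEquivOfIsCompl_symm_apply_right C Y hC.symm ⟨e x, hxY⟩)
      simp [show x = 0 from Prod.ext hx1 (hg x hx hx1)]
    · have : (e x : Z) ∈ g.map (e : C × Y →ₗ[F] Z) ⊓ Y :=
        ⟨⟨x, hx, rfl⟩, by simp [e, coe_prodEquivOfIsCompl', hx1]⟩
      rw [hg, mem_bot, coe_prodEquivOfIsCompl', hx1] at this
      simpa using this
  have hrank : finrank F C = finrank F Z - finrank F Y := by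
    have := Submodule.finrank_sup_add_finrank_inf_eq Y C
    rw [hC.inf_eq_bot, hC.sup_eq_top, finrank_bot, finrank_top] at this
    omega
  have splitting :
      {g : Submodule F (C × Y) // (∀ x ∈ g, x.1 = 0 → x.2 = 0) ∧ finrank F g = c} ≃
        {W : Submodule F Z // W ⊓ Y = ⊥ ∧ finrank F W = c} :=
    (orderIsoMapComap e).toEquiv.subtypeEquiv fun g => by
      change _ ↔ g.map (e : C × Y →ₗ[F] Z) ⊓ Y = ⊥ ∧ finrank F (g.map (e : C × Y →ₗ[F] Z)) = c
      rw [e.finrank_map_eq, hgraph]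
  rw [← Nat.card_congr splitting, card_graph_finrank_eq,
    card_submodule_finrank_eq_grassmannianCard hrank, mul_comm, mul_comm c]

theorem card_inf_eq_finrank_eq {Y V' : Submodule F Z} (hV'Y : V' ≤ Y) {m : ℕ}
    (hm : finrank F V' ≤ m) :
    Nat.card {V : Submodule F Z // V ⊓ Y = V' ∧ finrank F V = m}
      = Fintype.card F ^ ((finrank F Y - finrank F V') * (m - finrank F V'))
        * grassmannianCard F (finrank F Z - finrank F Y) (m - finrank F V') := by
  have hπ : Function.Surjective V'.mkQ := V'.mkQ_surjective
  have finrank_map_mkQ {P : Submodule F Z} (hP : V' ≤ P) :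
      finrank F (P.map V'.mkQ) + finrank F V' = finrank F P := by
    have := finrank_map_add_finrank_inf_ker V'.mkQ P
    rwa [ker_mkQ, inf_eq_right.2 hP] at this
  have comap_inf_eq (w : Submodule F (Z ⧸ V')) :
      w.comap V'.mkQ ⊓ Y = (w ⊓ Y.map V'.mkQ).comap V'.mkQ := by
    rw [comap_inf, comap_map_mkQ, sup_eq_right.2 hV'Y]
  have le_of_inf_eq {V : Submodule F Z} (hV : V ⊓ Y = V') : V' ≤ V := hV ▸ inf_le_left
  have quotient :
      {w : Submodule F (Z ⧸ V') // w ⊓ Y.map V'.mkQ = ⊥ ∧ finrank F w = m - finrank F V'}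
        ≃ {V : Submodule F Z // V ⊓ Y = V' ∧ finrank F V = m} :=
    { toFun w := ⟨w.1.comap V'.mkQ, by
        constructor
        · rw [comap_inf_eq, w.2.1, comap_bot, ker_mkQ]
        · have := finrank_map_mkQ (le_comap_mkQ V' w.1)
          rw [map_comap_eq_of_surjective hπ, w.2.2] at this
          omega⟩
      invFun V := ⟨V.1.map V'.mkQ, by
        have hV'V := le_of_inf_eq V.2.1
        constructor
        · apply comap_injective_of_surjective hπ
          rw [← comap_inf_eq, comap_map_mkQ, sup_eq_right.2 hV'V, V.2.1, comap_bot, ker_mkQ]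
        · have := finrank_map_mkQ hV'V
          omega⟩
      left_inv w := Subtype.ext (map_comap_eq_of_surjective hπ w.1)
      right_inv V := Subtype.ext <|
        (comap_map_mkQ V' V.1).trans (sup_eq_right.2 (le_of_inf_eq V.2.1)) }
  have hY := finrank_map_mkQ hV'Y
  have hZ := V'.finrank_quotient_add_finrank
  have hYZ := Y.finrank_le
  rw [← Nat.card_congr quotient, card_inf_eq_bot_finrank_eq,
    show finrank F (Y.map V'.mkQ) = finrank F Y - finrank F V' by omega,
    show finrank F (Z ⧸ V') - (finrank F Y - finrank F V') = finrank F Z - finrank F Y by omega]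

theorem card_le_inf_eq_finrank_eq {Z₀ Y V' : Submodule F Z} (hYZ₀ : Y ≤ Z₀) (hV'Y : V' ≤ Y)
    {m : ℕ} (hm : finrank F V' ≤ m) :
    Nat.card {V : Submodule F Z // V ≤ Z₀ ∧ V ⊓ Y = V' ∧ finrank F V = m}
      = Fintype.card F ^ ((finrank F Y - finrank F V') * (m - finrank F V'))
        * grassmannianCard F (finrank F Z₀ - finrank F Y) (m - finrank F V') := by
  have map_comap_subtype_eq {P : Submodule F Z} (hP : P ≤ Z₀) :
      (P.comap Z₀.subtype).map Z₀.subtype = P := by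
    rw [map_comap_subtype, inf_eq_right.2 hP]
  have finrank_comap_subtype {P : Submodule F Z} (hP : P ≤ Z₀) :
      finrank F (P.comap Z₀.subtype) = finrank F P := by
    rw [← finrank_map_subtype_eq, map_comap_subtype_eq hP]
  have map_inf_eq (v : Submodule F Z₀) :
      v.map Z₀.subtype ⊓ Y = (v ⊓ Y.comap Z₀.subtype).map Z₀.subtype := by
    rw [map_inf _ (injective_subtype Z₀), map_comap_subtype_eq hYZ₀]
  have restrict :
      {v : Submodule F Z₀ // v ⊓ Y.comap Z₀.subtype = V'.comap Z₀.subtype ∧ finrank F v = m}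
        ≃ {V : Submodule F Z // V ≤ Z₀ ∧ V ⊓ Y = V' ∧ finrank F V = m} :=
    { toFun v := ⟨v.1.map Z₀.subtype, map_subtype_le _ _,
        by rw [map_inf_eq, v.2.1, map_comap_subtype_eq (hV'Y.trans hYZ₀)],
        by rw [finrank_map_subtype_eq, v.2.2]⟩
      invFun V := ⟨V.1.comap Z₀.subtype, by rw [← comap_inf, V.2.2.1],
        by rw [finrank_comap_subtype V.2.1, V.2.2.2]⟩
      left_inv v := Subtype.ext (comap_map_eq_of_injective (injective_subtype Z₀) v.1)
      right_inv V := Subtype.ext (map_comap_subtype_eq V.2.1) }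
  have hV' := finrank_comap_subtype (hV'Y.trans hYZ₀)
  rw [← Nat.card_congr restrict, card_inf_eq_finrank_eq (comap_mono hV'Y) (hV' ▸ hm),
    finrank_comap_subtype hYZ₀, hV']

theorem card_schubertCell_succ (hW : Monotone W) {b : ℕ → ℕ} {n : ℕ} (hb : b n ≤ b (n + 1)) :
    Nat.card (schubertCell W b (n + 1))
      = Nat.card (schubertCell W b n)
        * (Fintype.card F ^ ((finrank F (W n) - b n) * (b (n + 1) - b n))
          * grassmannianCard F (finrank F (W (n + 1)) - finrank F (W n)) (b (n + 1) - b n)) := by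
  have extend : (Σ V' : schubertCell W b n,
        {V : Submodule F Z // V ≤ W (n + 1) ∧ V ⊓ W n = V'.1 ∧ finrank F V = b (n + 1)})
      ≃ schubertCell W b (n + 1) :=
    { toFun p := ⟨p.2.1, p.2.2.1, fun d hd => by
        obtain ⟨⟨V', -, hV'⟩, ⟨V, hVW, hVV', hV⟩⟩ := p
        dsimp only at hVV' ⊢
        subst hVV'
        rcases Nat.of_le_succ hd with hd | rfl
        · rw [← hV' d hd, inf_assoc, inf_eq_right.2 (hW hd)]
        · rw [inf_eq_left.2 hVW, hV]⟩
      invFun V := ⟨⟨V.1 ⊓ W n, inf_le_right, fun d hd => by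
          rw [inf_assoc, inf_eq_right.2 (hW hd)]
          exact V.2.2 d (Nat.le_succ_of_le hd)⟩,
        ⟨V.1, V.2.1, rfl, by rw [← inf_eq_left.2 V.2.1]; exact V.2.2 _ le_rfl⟩⟩
      left_inv := by
        rintro ⟨⟨V', hV'⟩, ⟨V, hV⟩⟩
        obtain rfl := hV.2.1
        rfl
      right_inv _ := rfl }
  rw [← Nat.card_congr extend]
  refine Nat.card_sigma_of_card_eq fun V' => ?_
  have hV' : finrank F V'.1 = b n := by rw [← inf_eq_left.2 V'.2.1]; exact V'.2.2 n le_rfl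
  rw [card_le_inf_eq_finrank_eq (hW n.le_succ) V'.2.1 (hV' ▸ hb), hV']

theorem card_schubertCell (hW : Monotone W) {b : ℕ → ℕ} (hb0 : b 0 = finrank F (W 0)) (n : ℕ)
    (hb : ∀ d < n, b d ≤ b (d + 1)) :
    Nat.card (schubertCell W b n)
      = ∏ d ∈ Finset.range n, Fintype.card F ^ ((finrank F (W d) - b d) * (b (d + 1) - b d))
          * grassmannianCard F (finrank F (W (d + 1)) - finrank F (W d)) (b (d + 1) - b d) := by
  induction n with
  | zero => rw [card_schubertCell_zero hb0, Finset.prod_range_zero]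
  | succ n ih =>
    rw [card_schubertCell_succ hW (hb n n.lt_succ_self), ih fun d hd => hb d (Nat.lt_succ_of_lt hd),
      Finset.prod_range_succ]

end Counting

section Nilpotent
variable {F X : Type*} [Field F] [AddCommGroup X] [Module F X] [FiniteDimensional F X]
  (N : Module.End F X)

theorem finrank_range_inf_ker_pow_add_finrank_ker (d : ℕ) :
    finrank F (range N ⊓ ker (N ^ d) : Submodule F X) + finrank F (ker N)
      = finrank F (ker (N ^ (d + 1))) := by
  have hker : ker (N ^ (d + 1)) = (ker (N ^ d)).comap N := by
    rw [pow_succ, Module.End.mul_eq_comp, ker_comp]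
  have := finrank_map_add_finrank_inf_ker N (ker (N ^ (d + 1)))
  rwa [inf_eq_right.2 (hker ▸ ker_le_comap N), hker, map_comap_eq] at this

theorem finrank_inf_range_sup_ker_pow {V : Submodule F X} (hV : range N ≤ V) (d : ℕ) :
    finrank F (V ⊓ (range N ⊔ ker (N ^ d)) : Submodule F X) + finrank F (ker (N ^ (d + 1)))
      = finrank F (V ⊓ ker (N ^ d) : Submodule F X) + finrank F X := by
  have hmodular : V ⊓ (range N ⊔ ker (N ^ d)) = range N ⊔ V ⊓ ker (N ^ d) := by
    rw [inf_comm, sup_inf_assoc_of_le _ hV, inf_comm]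
  have hinf : range N ⊓ (V ⊓ ker (N ^ d)) = range N ⊓ ker (N ^ d) := by
    rw [← inf_assoc, inf_eq_left.2 hV]
  have := Submodule.finrank_sup_add_finrank_inf_eq (range N) (V ⊓ ker (N ^ d))
  rw [← hmodular, hinf] at this
  have := finrank_range_inf_ker_pow_add_finrank_ker N d
  have := N.finrank_range_add_finrank_ker
  omega

theorem finrank_range_sup_ker_pow (d : ℕ) :
    finrank F (range N ⊔ ker (N ^ d) : Submodule F X) + finrank F (ker (N ^ (d + 1)))
      = finrank F (ker (N ^ d)) + finrank F X := by
  have := finrank_inf_range_sup_ker_pow N le_top d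
  rwa [top_inf_eq, top_inf_eq] at this

variable {N}

theorem ker_pow_eq_top_of_isNilpotent (hN : IsNilpotent N) {d : ℕ} (hd : finrank F X ≤ d) :
    ker (N ^ d) = ⊤ := by
  obtain ⟨k, hk⟩ := hN
  rw [Module.End.ker_pow_eq_ker_pow_finrank_of_le hd, eq_top_iff]
  calc ⊤ = ker (N ^ k) := by rw [hk, ker_zero]
    _ ≤ _ := Module.End.ker_pow_le_ker_pow_finrank N k

theorem eq_zero_of_sum_eq_finrank_ker_pow (hN : IsNilpotent N) {lam : ℕ → ℕ}
    (hlam : ∀ d, ∑ r ∈ Finset.range d, lam r = finrank F (ker (N ^ d))) {d : ℕ}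
    (hd : finrank F X ≤ d) : lam d = 0 := by
  have := hlam (d + 1)
  rw [Finset.sum_range_succ, hlam d, ker_pow_eq_top_of_isNilpotent hN hd,
    ker_pow_eq_top_of_isNilpotent hN (hd.trans d.le_succ)] at this
  omega

theorem range_le_and_finrank_inf_ker_pow_iff (hN : IsNilpotent N) {n : ℕ} (hn : finrank F X ≤ n)
    {mu : ℕ → ℕ} (hmu : ∀ d, n ≤ d → mu d = 0) (V : Submodule F X) :
    (range N ≤ V ∧ ∀ d, ∑ r ∈ Finset.range d, mu r = finrank F (V ⊓ ker (N ^ d) : Submodule F X))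
      ↔ V ∈ schubertCell (fun d => range N ⊔ ker (N ^ d))
          (fun d => ∑ r ∈ Finset.range d, mu r + finrank F X - finrank F (ker (N ^ (d + 1))))
          n := by
  have hK (d) (hd : n ≤ d) := ker_pow_eq_top_of_isNilpotent hN (hn.trans hd)
  rw [schubertCell, Set.mem_ofPred_eq]
  refine ⟨fun ⟨hV, hmu_eq⟩ => ⟨by simp [hK n le_rfl], fun d _ => ?_⟩, fun ⟨_, hW⟩ => ?_⟩
  · have := finrank_inf_range_sup_ker_pow N hV d
    have := hmu_eq d
    omega
  · have hV : range N ≤ V := by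
      have h0 := hW 0 (Nat.zero_le n)
      have := N.finrank_range_add_finrank_ker
      rw [pow_zero, Module.End.one_eq_id, ker_id, sup_bot_eq, Finset.sum_range_zero, zero_add,
        zero_add, pow_one] at h0
      exact inf_eq_right.1 (eq_of_le_of_finrank_eq inf_le_right (by omega))
    have hle (d) (hd : d ≤ n) :
        ∑ r ∈ Finset.range d, mu r = finrank F (V ⊓ ker (N ^ d) : Submodule F X) := by
      have := finrank_inf_range_sup_ker_pow N hV d
      have := hW d hd
      have := (ker (N ^ (d + 1))).finrank_le
      omega
    refine ⟨hV, fun d => (le_total d n).elim (hle d) fun hd => ?_⟩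
    rw [hK d hd, ← hK n le_rfl, ← hle n le_rfl, ← Finset.sum_range_add_sum_Ico _ hd,
      Finset.sum_eq_zero fun r hr => hmu r (Finset.mem_Ico.1 hr).1, add_zero]

end Nilpotent

/-- Parts are 0-indexed; `[a choose b]_q` appears as the number of `b`-dimensional subspaces of
`F^a`, and the conjugate partition of `N|_V` through `dim ker (N|_V)^d = dim (V ⊓ ker N^d)`. -/
theorem stmt_9_general (F : Type*) [Field F] [Fintype F] (n : ℕ) (lam mu : ℕ → ℕ)
    (hstrip : ∀ i, mu i ≤ lam i ∧ lam (i + 1) ≤ mu i)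
    (N : (Fin n → F) →ₗ[F] (Fin n → F)) (hNnil : IsNilpotent N)
    (hJF : ∀ d : ℕ, ∑ r ∈ Finset.range d, lam r
      = Module.finrank F (LinearMap.ker (N ^ d))) :
    Nat.card {V : Submodule F (Fin n → F) // LinearMap.range N ≤ V ∧
        ∀ d : ℕ, ∑ r ∈ Finset.range d, mu r
          = Module.finrank F ((V ⊓ LinearMap.ker (N ^ d) : Submodule F (Fin n → F)))}
      = (∏ j ∈ Finset.range n, ∏ i ∈ Finset.range j,
          Fintype.card F ^ ((lam i - mu i) * (mu j - lam (j + 1))))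
        * ∏ i ∈ Finset.range n, Nat.card {U : Submodule F (Fin (lam i - lam (i + 1)) → F) //
            Module.finrank F U = mu i - lam (i + 1)} := by
  have hn : finrank F (Fin n → F) ≤ n := (Module.finrank_fin_fun F).le
  have hmu (d) (hd : n ≤ d) : mu d = 0 := Nat.le_zero.1 <|
    (hstrip d).1.trans (eq_zero_of_sum_eq_finrank_ker_pow hNnil hJF (hn.trans hd)).le
  have hstep (d : ℕ) := And.intro (finrank_range_sup_ker_pow N d) <| And.intro
    (ker (N ^ (d + 1))).finrank_le <| And.intro (Finset.sum_range_succ lam d) <|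
      And.intro (Finset.sum_range_succ mu d) (hstrip d)
  simp only [Module.finrank_fin_fun, ← hJF] at hstep
  rw [Nat.card_congr (Equiv.subtypeEquivRight (range_le_and_finrank_inf_ker_pow_iff hNnil hn hmu)),
    card_schubertCell (W := fun d => range N ⊔ ker (N ^ d))
      (fun a b h => sup_le_sup_left ((iterateKer N).monotone h) _) ?_ n ?_,
    ← Finset.prod_mul_distrib]
  all_goals simp only [Module.finrank_fin_fun, ← hJF]
  · refine Finset.prod_congr rfl fun d _ => ?_
    rw [Finset.prod_pow_eq_pow_sum, ← Finset.sum_mul,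
      Finset.sum_tsub_distrib _ fun i _ => (hstrip i).1]
    have := hstep d
    have := hstep (d + 1)
    refine congrArg₂ (· * ·) (congrArg₂ (fun a b => Fintype.card F ^ (a * b)) ?_ ?_)
      (congrArg₂ (grassmannianCard F) ?_ ?_) <;> omega
  · have := hstep 0
    simp only [Finset.sum_range_zero] at this ⊢
    omega
  · intro d _
    have := hstep d
    have := hstep (d + 1)
    omega

/-- Let `λ/μ` be a horizontal strip and `N` a nilpotent endomorphism of `F^n`
(`F` the field with `q` elements) with conjugated Jordan form partition `λ`
(i.e. `λ_1 + ... + λ_d = dim ker N^d`).  The number of subspaces `V ⊆ F^n` with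
`N(F^n) ⊆ V` whose restricted conjugated Jordan form partition is `μ`
(i.e. `μ_1 + ... + μ_d = dim ker((N|_V)^d) = dim (V ∩ ker N^d)`) equals
`∏_{i < j} q^{(λ_i − μ_i)(μ_j − λ_{j+1})} · ∏_i [λ_i − λ_{i+1} choose μ_i − λ_{i+1}]_q`,
where the Gaussian binomial `[a choose b]_q` is the number of `b`-dimensional subspaces
of `F^a`.  Parts are 0-indexed. -/
theorem stmt_9 (F : Type*) [Field F] [Fintype F] (n : ℕ) (lam mu : ℕ → ℕ)
    (hlam : ∀ i, lam (i + 1) ≤ lam i) (hsupp : ∀ i, n ≤ i → lam i = 0)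
    (hsum : ∑ i ∈ Finset.range n, lam i = n)
    (hstrip : ∀ i, mu i ≤ lam i ∧ lam (i + 1) ≤ mu i)
    (N : (Fin n → F) →ₗ[F] (Fin n → F)) (hNnil : IsNilpotent N)
    (hJF : ∀ d : ℕ, ∑ r ∈ Finset.range d, lam r
      = Module.finrank F (LinearMap.ker (N ^ d))) :
    Nat.card {V : Submodule F (Fin n → F) // LinearMap.range N ≤ V ∧
        ∀ d : ℕ, ∑ r ∈ Finset.range d, mu r
          = Module.finrank F ((V ⊓ LinearMap.ker (N ^ d) : Submodule F (Fin n → F)))}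
      = (∏ j ∈ Finset.range n, ∏ i ∈ Finset.range j,
          Fintype.card F ^ ((lam i - mu i) * (mu j - lam (j + 1))))
        * ∏ i ∈ Finset.range n, Nat.card {U : Submodule F (Fin (lam i - lam (i + 1)) → F) //
            Module.finrank F U = mu i - lam (i + 1)} :=
  stmt_9_general F n lam mu hstrip N hNnil hJF
end

section
/- Let α, β be weak compositions of n with k and l parts. The map sending a permutation w ∈ S_n to the k × l matrix M with M_{i,j} = #{b in block j of β : w(b) in block i of α} induces a bijection between double cosets S_α \ S_n / S_β and nonnegative-integer k × l matrices with row sums α and column sums β. -/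
/-- `r` lies in the `i`-th block of the weak composition `α` (0-indexed blocks):
`α_1 + ... + α_i ≤ r < α_1 + ... + α_{i+1}` (with `r` 0-indexed). -/
def inBlk (α : ℕ → ℕ) (i r : ℕ) : Prop :=
  (∑ s ∈ Finset.range i, α s) ≤ r ∧ r < ∑ s ∈ Finset.range (i + 1), α s

/-- The block-counting matrix of a permutation `w` relative to `(α, β)`:
`matOf α β w i j = #{b in block j of β : w(b) in block i of α}`. -/
noncomputable def matOf {n : ℕ} (α β : ℕ → ℕ) (w : Equiv.Perm (Fin n)) (i j : ℕ) : ℕ :=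
  Nat.card {b : Fin n // inBlk β j (b : ℕ) ∧ inBlk α i ((w b : Fin n) : ℕ)}

/-- The permutation `a` preserves every block of `α` setwise. -/
def presBlocks {n : ℕ} (α : ℕ → ℕ) (a : Equiv.Perm (Fin n)) : Prop :=
  ∀ (i : ℕ) (r : Fin n), inBlk α i (r : ℕ) → inBlk α i ((a r : Fin n) : ℕ)

/-!
A permutation `w` is recorded by the map `x ↦ (α-block of w x, β-block of x)`, and `matOf α β w`
lists the sizes of its fibres. Left multiplication by `S_α` and right multiplication by `S_β`
do not change these sizes. Conversely, two maps `X → A × B` with fibres of the same sizes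
differ by a permutation of `X`, which is assembled fibre by fibre; this yields the two
elements of the Young subgroups. For surjectivity, split each `β`-block into pieces of sizes
given by a column of `M`. The union over `j` of the pieces labelled `i` then has `α i`
elements, and a fibrewise bijection carries it onto the `i`-th `α`-block.
-/

open Finset Equiv

section Fibres

variable {X A B : Type*}

theorem Equiv.Perm.card_fiber_mul_mul (p : X → A) (q : X → B) {σ τ : Perm X}
    (hσ : p ∘ σ = p) (hτ : q ∘ τ = q) (v : Perm X) (c : A × B) :
    Nat.card {x // (p ((σ * v * τ) x), q x) = c} = Nat.card {x // (p (v x), q x) = c} :=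
  Nat.card_congr <| τ.subtypeEquiv fun x => by
    rw [Perm.mul_apply, Perm.mul_apply, ← Function.comp_apply (f := p), hσ,
      ← Function.comp_apply (f := q) (g := τ), hτ]

theorem Equiv.Perm.card_fiber_eq_iff_exists_mul_mul [Finite X] (p : X → A) (q : X → B)
    (v w : Perm X) :
    (∀ c, Nat.card {x // (p (v x), q x) = c} = Nat.card {x // (p (w x), q x) = c}) ↔
      ∃ σ τ : Perm X, p ∘ σ = p ∧ q ∘ τ = q ∧ w = σ * v * τ := by
  refine ⟨fun h => ?_, ?_⟩
  · let f : X → A × B := fun x => (p (v x), q x)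
    let g : X → A × B := fun x => (p (w x), q x)
    let e : Perm X := ofFiberEquiv (f := f) (g := g) fun c => (Finite.card_eq.mp (h c)).some
    have he : ∀ x, g (e x) = f x := ofFiberEquiv_map _
    refine ⟨w * e * v⁻¹, e⁻¹, funext fun x => ?_, funext fun x => ?_, by group⟩
    · simpa [f, g] using congrArg Prod.fst (he (v⁻¹ x))
    · simpa [f, g] using (congrArg Prod.snd (he (e⁻¹ x))).symm
  · rintro ⟨σ, τ, hσ, hτ, rfl⟩ c
    exact (card_fiber_mul_mul p q hσ hτ v c).symm

theorem exists_card_fiber_eq_of_card_eq_sum {Y : Type*} [Finite Y] (s : Finset A) (m : A → ℕ)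
    (hm : ∀ a ∉ s, m a = 0) (h : Nat.card Y = ∑ a ∈ s, m a) :
    ∃ c : Y → A, ∀ a, Nat.card {y // c y = a} = m a := by
  obtain ⟨e⟩ : Nonempty (Y ≃ Σ a : s, Fin (m a)) :=
    Finite.card_eq.mp (by rw [h, Nat.card_sigma]; simpa using (sum_attach s m).symm)
  refine ⟨fun y => (e y).1, fun a => ?_⟩
  by_cases ha : a ∈ s
  · calc Nat.card {y // ((e y).1 : A) = a}
        = Nat.card {t : Σ a : s, Fin (m a) // t.1 = ⟨a, ha⟩} :=
          Nat.card_congr (e.subtypeEquiv fun y => by simp [Subtype.ext_iff])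
      _ = m a := by simp [Nat.card_congr (sigmaSubtype _)]
  · have : IsEmpty {y // ((e y).1 : A) = a} := ⟨fun y => ha (y.2 ▸ (e y.1).1.2)⟩
    rw [Nat.card_of_isEmpty, hm a ha]

theorem exists_card_fiber_prod_eq [Finite X] (q : X → B) (s : Finset A) (M : A → B → ℕ)
    (hM : ∀ a ∉ s, ∀ b, M a b = 0) (h : ∀ b, Nat.card {x // q x = b} = ∑ a ∈ s, M a b) :
    ∃ c : X → A, ∀ a b, Nat.card {x // (c x, q x) = (a, b)} = M a b := by
  choose c hc using fun b =>
    exists_card_fiber_eq_of_card_eq_sum s (M · b) (fun a ha => hM a ha b) (h b)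
  refine ⟨fun x => c (q x) ⟨x, rfl⟩, fun a b => (Nat.card_congr ?_).trans (hc b a)⟩
  exact
    { toFun := fun ⟨x, hx⟩ => ⟨⟨x, (Prod.mk.inj hx).2⟩, by
        obtain ⟨hca, rfl⟩ := Prod.mk.inj hx; exact hca⟩
      invFun := fun ⟨⟨x, hq⟩, hca⟩ => ⟨x, by subst hq; exact Prod.ext hca rfl⟩
      left_inv := fun _ => rfl
      right_inv := fun _ => rfl }

theorem card_fiber_eq_sum_card_fiber_prod [Finite X] (c : X → A) (q : X → B) (t : Finset B)
    (ht : ∀ x, q x ∈ t) (a : A) :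
    Nat.card {x // c x = a} = ∑ b ∈ t, Nat.card {x // (c x, q x) = (a, b)} := by
  classical
  have := Fintype.ofFinite X
  simp only [Nat.card_eq_fintype_card, Fintype.card_subtype, Prod.mk.injEq]
  rw [card_eq_sum_card_fiberwise fun x _ => ht x]
  simp only [filter_filter]

end Fibres

section Blocks

variable {γ : ℕ → ℕ} {i i' k n r : ℕ}

theorem le_of_inBlk_of_inBlk (h : inBlk γ i r) (h' : inBlk γ i' r) : i' ≤ i := by
  by_contra! hlt
  have := sum_le_sum_of_subset (f := γ) (range_subset_range.2 (Nat.succ_le_of_lt hlt))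
  exact absurd (h.2.trans_le (this.trans h'.1)) (lt_irrefl r)

theorem inBlk_unique (h : inBlk γ i r) (h' : inBlk γ i' r) : i = i' :=
  le_antisymm (le_of_inBlk_of_inBlk h' h) (le_of_inBlk_of_inBlk h h')

theorem sum_range_le_of_support (hsupp : ∀ i, k ≤ i → γ i = 0) (hγ : ∑ s ∈ range k, γ s = n)
    (j : ℕ) : ∑ s ∈ range j, γ s ≤ n := by
  calc ∑ s ∈ range j, γ s ≤ ∑ s ∈ range (max j k), γ s :=
        sum_le_sum_of_subset (range_subset_range.2 (le_max_left j k))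
    _ = n := by
      rw [← hγ]
      exact (sum_subset (range_subset_range.2 (le_max_right j k))
        fun s _ hs => hsupp s (by simpa using hs)).symm

theorem Fin.natCard_subtype_Ico {a b : ℕ} (hb : b ≤ n) :
    Nat.card {x : Fin n // a ≤ (x : ℕ) ∧ (x : ℕ) < b} = b - a := by
  have e : {x : Fin n // a ≤ (x : ℕ) ∧ (x : ℕ) < b} ≃ Ico a b :=
    { toFun := fun x => ⟨x.1, mem_Ico.2 x.2⟩
      invFun := fun m => ⟨⟨m.1, (mem_Ico.1 m.2).2.trans_le hb⟩, mem_Ico.1 m.2⟩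
      left_inv := fun _ => rfl
      right_inv := fun _ => rfl }
  rw [Nat.card_congr e, Nat.card_eq_finsetCard, Nat.card_Ico]

/-- The index of the block containing `r` (the junk value `0` if `r` lies beyond all blocks). -/
noncomputable def blockOf (γ : ℕ → ℕ) (r : Fin n) : ℕ :=
  sInf {i | (r : ℕ) < ∑ s ∈ range (i + 1), γ s}

theorem blockOf_spec (hγ : ∑ s ∈ range k, γ s = n) (r : Fin n) :
    inBlk γ (blockOf γ r) r ∧ blockOf γ r < k := by
  set S := {i | (r : ℕ) < ∑ s ∈ range (i + 1), γ s}
  have hk : 0 < k := Nat.pos_of_ne_zero fun hk => by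
    simp only [hk, range_zero, sum_empty] at hγ
    exact absurd r.2 (by omega)
  have hmem : k - 1 ∈ S := by
    simp only [S, Set.mem_ofPred_eq, Nat.sub_add_cancel hk, hγ, r.2]
  refine ⟨⟨?_, Nat.sInf_mem ⟨_, hmem⟩⟩, (Nat.sInf_le hmem).trans_lt (Nat.sub_lt hk one_pos)⟩
  rcases Nat.eq_zero_or_pos (blockOf γ r) with h0 | h0
  · simp [h0]
  · have : blockOf γ r - 1 ∉ S := Nat.notMem_of_lt_sInf (Nat.sub_lt h0 one_pos)
    simpa [S, Nat.sub_add_cancel h0] using this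

theorem blockOf_eq_iff (hγ : ∑ s ∈ range k, γ s = n) {r : Fin n} :
    blockOf γ r = i ↔ inBlk γ i r :=
  ⟨fun h => h ▸ (blockOf_spec hγ r).1, inBlk_unique (blockOf_spec hγ r).1⟩

theorem card_blockOf_eq (hsupp : ∀ i, k ≤ i → γ i = 0) (hγ : ∑ s ∈ range k, γ s = n) (i : ℕ) :
    Nat.card {r : Fin n // blockOf γ r = i} = γ i := by
  simp only [blockOf_eq_iff hγ, inBlk]
  rw [Fin.natCard_subtype_Ico (sum_range_le_of_support hsupp hγ _), sum_range_succ,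
    Nat.add_sub_cancel_left]

theorem presBlocks_iff (hγ : ∑ s ∈ range k, γ s = n) {a : Perm (Fin n)} :
    presBlocks γ a ↔ blockOf γ ∘ a = blockOf γ :=
  ⟨fun h => funext fun r => (blockOf_eq_iff hγ).2 (h _ r (blockOf_spec hγ r).1),
    fun h _ r hr => (blockOf_eq_iff hγ).1 ((congrFun h r).trans ((blockOf_eq_iff hγ).2 hr))⟩

end Blocks

theorem matOf_eq_card_fiber {n k l : ℕ} {α β : ℕ → ℕ} (hα : ∑ s ∈ range k, α s = n)
    (hβ : ∑ s ∈ range l, β s = n) (w : Perm (Fin n)) (i j : ℕ) :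
    matOf α β w i j = Nat.card {x // (blockOf α (w x), blockOf β x) = (i, j)} :=
  Nat.card_congr <| subtypeEquivRight fun x => by
    rw [Prod.mk.injEq, blockOf_eq_iff hα, blockOf_eq_iff hβ, and_comm]

theorem stmt_10_general (n k l : ℕ) (α β : ℕ → ℕ)
    (hαsum : ∑ i ∈ Finset.range k, α i = n)
    (hβsum : ∑ j ∈ Finset.range l, β j = n) :
    (∀ v w : Equiv.Perm (Fin n),
        (∀ i j, matOf α β v i j = matOf α β w i j) ↔
          ∃ a b : Equiv.Perm (Fin n), presBlocks α a ∧ presBlocks β b ∧ w = a * v * b) ∧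
    (∀ M : ℕ → ℕ → ℕ, (∀ i j, k ≤ i ∨ l ≤ j → M i j = 0) →
        (∀ i, ∑ j ∈ Finset.range l, M i j = α i) →
        (∀ j, ∑ i ∈ Finset.range k, M i j = β j) →
        ∃ w : Equiv.Perm (Fin n), ∀ i j, matOf α β w i j = M i j) := by
  refine ⟨fun v w => ?_, fun M hM0 hrow hcol => ?_⟩
  · simp only [matOf_eq_card_fiber hαsum hβsum, presBlocks_iff hαsum, presBlocks_iff hβsum]
    rw [← Perm.card_fiber_eq_iff_exists_mul_mul, Prod.forall]
  · have hαsupp : ∀ i, k ≤ i → α i = 0 := fun i hi => by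
      rw [← hrow i]; exact sum_eq_zero fun j _ => hM0 i j (.inl hi)
    have hβsupp : ∀ j, l ≤ j → β j = 0 := fun j hj => by
      rw [← hcol j]; exact sum_eq_zero fun i _ => hM0 i j (.inr hj)
    obtain ⟨c, hc⟩ := exists_card_fiber_prod_eq (blockOf β) (range k) M
      (fun i hi j => hM0 i j (.inl (by simpa using hi)))
      fun j => by rw [card_blockOf_eq hβsupp hβsum, hcol]
    have hfib : ∀ i, Nat.card {x // c x = i} = Nat.card {x // blockOf α x = i} := fun i => by
      rw [card_fiber_eq_sum_card_fiber_prod c (blockOf β) (range l)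
        (fun x => mem_range.2 (blockOf_spec hβsum x).2), card_blockOf_eq hαsupp hαsum, ← hrow]
      simp only [hc]
    let w : Perm (Fin n) := ofFiberEquiv fun i => (Finite.card_eq.mp (hfib i)).some
    refine ⟨w, fun i j => ?_⟩
    simp only [matOf_eq_card_fiber hαsum hβsum, w, ofFiberEquiv_map, hc]

/-- Let `α, β` be weak compositions of `n` with `k` and `l` parts.  The map
`w ↦ matOf α β w` induces a bijection between the double cosets `S_α \ S_n / S_β`
(where `S_α` is the Young subgroup preserving the blocks of `α`) and nonnegative-integer
`k × l` matrices with row sums `α` and column sums `β`: two permutations have the same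
block-counting matrix iff they lie in the same double coset, and every matrix with the
prescribed row and column sums arises. -/
theorem stmt_10 (n k l : ℕ) (α β : ℕ → ℕ)
    (hαsupp : ∀ i, k ≤ i → α i = 0) (hαsum : ∑ i ∈ Finset.range k, α i = n)
    (hβsupp : ∀ j, l ≤ j → β j = 0) (hβsum : ∑ j ∈ Finset.range l, β j = n) :
    (∀ v w : Equiv.Perm (Fin n),
        (∀ i j, matOf α β v i j = matOf α β w i j) ↔
          ∃ a b : Equiv.Perm (Fin n), presBlocks α a ∧ presBlocks β b ∧ w = a * v * b) ∧
    (∀ M : ℕ → ℕ → ℕ, (∀ i j, k ≤ i ∨ l ≤ j → M i j = 0) →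
        (∀ i, ∑ j ∈ Finset.range l, M i j = α i) →
        (∀ j, ∑ i ∈ Finset.range k, M i j = β j) →
        ∃ w : Equiv.Perm (Fin n), ∀ i j, matOf α β w i j = M i j) :=
  stmt_10_general n k l α β hαsum hβsum
end

section
/- Let α, β be weak compositions of n, let M be a k × l nonnegative-integer matrix with row sums α and column sums β, and let F, F' be partial flags of types α, β in k^n with relative position M. Then the set of nilpotent endomorphisms N of k^n strictly compatible with both F and F' (i.e., N(F_i) ⊆ F_{i−1} and N(F'_j) ⊆ F'_{j−1} for all i, j) is a linear subspace of dimension Σ_{1 ≤ i < i' ≤ k, 1 ≤ j < j' ≤ l} M_{i,j} M_{i',j'} (after conjugating to a standard pair of flags). -/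
/-!
For each cell `(i, j)` choose `M i j` vectors completing
`F i ⊓ F' (j + 1) ⊔ F (i + 1) ⊓ F' j` to `F (i + 1) ⊓ F' (j + 1)`; the modular law and the
relative-position formula show that exactly `M i j` are needed. By induction the vectors of the
cells `(i', j')` with `i' < i`, `j' < j` span `F i ⊓ F' j`, so all of them form a basis of `V`
adapted to both flags. An endomorphism is strictly compatible with both flags (hence nilpotent)
iff it sends every vector of the cell `(i, j)` into `F i ⊓ F' j`, so these endomorphisms form a
space of dimension `∑ M i j * dim (F i ⊓ F' j) = ∑_{i' < i, j' < j} M i j * M i' j'`.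
-/

open Module Submodule

theorem Submodule.exists_sup_span_range_eq {𝕜 V : Type*} [DivisionRing 𝕜] [AddCommGroup V]
    [Module 𝕜 V] [FiniteDimensional 𝕜 V] {B A : Submodule 𝕜 V} (hBA : B ≤ A) {m : ℕ}
    (h : finrank 𝕜 A = finrank 𝕜 B + m) :
    ∃ f : Fin m → V, B ⊔ span 𝕜 (Set.range f) = A := by
  induction m generalizing B with
  | zero => exact ⟨Fin.elim0, by simpa using eq_of_le_of_finrank_eq hBA h.symm⟩
  | succ m ih =>
    obtain ⟨x, hxA, hxB⟩ := SetLike.exists_of_lt (hBA.lt_of_ne (by rintro rfl; omega))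
    obtain ⟨f, hf⟩ := ih (sup_le hBA (span_singleton_le_iff_mem _ _ |>.2 hxA))
      (by rw [finrank_sup_span_singleton hxB]; omega)
    exact ⟨Fin.cons x f, by rw [Fin.range_cons, span_insert, ← sup_assoc, hf]⟩

theorem Submodule.finrank_pi_univ {𝕜 V ι : Type*} [DivisionRing 𝕜] [AddCommGroup V]
    [Module 𝕜 V] [FiniteDimensional 𝕜 V] [Fintype ι] (W : ι → Submodule 𝕜 V) :
    finrank 𝕜 (pi Set.univ W) = ∑ i, finrank 𝕜 (W i) := by
  have hrange : LinearMap.range (LinearMap.piMap fun i => (W i).subtype) = pi Set.univ W :=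
    SetLike.coe_injective <| by
      rw [LinearMap.coe_range, LinearMap.coe_piMap, Set.range_piMap]
      simp
  rw [← hrange, LinearMap.finrank_range_of_inj, finrank_pi_fintype]
  exact Function.Injective.piMap fun i => Subtype.val_injective

section Constr

variable {𝕜 V V' ι : Type*} [Field 𝕜] [AddCommGroup V] [Module 𝕜 V] [AddCommGroup V']
  [Module 𝕜 V'] (b : Basis ι 𝕜 V) (W : ι → Submodule 𝕜 V')

theorem Module.Basis.mem_map_constr_pi (N : V →ₗ[𝕜] V') :
    N ∈ (pi Set.univ W).map (b.constr 𝕜).toLinearMap ↔ ∀ i, N (b i) ∈ W i := by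
  simp [mem_map_equiv]

theorem Module.Basis.finrank_map_constr_pi [Fintype ι] [FiniteDimensional 𝕜 V'] :
    finrank 𝕜 ((pi Set.univ W).map (b.constr 𝕜).toLinearMap) = ∑ i, finrank 𝕜 (W i) := by
  rw [LinearEquiv.finrank_map_eq, finrank_pi_univ]

end Constr

theorem Finset.sum_range_sum_range_eq_sum_sum_Ioo {β : Type*} [AddCommMonoid β] (k : ℕ)
    (f : ℕ → ℕ → β) :
    ∑ i ∈ range k, ∑ a ∈ range i, f a i = ∑ a ∈ range k, ∑ i ∈ Ioo a k, f a i :=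
  Finset.sum_comm' fun i a => by simp only [mem_range, mem_Ioo]; omega

theorem sum_mul_sum_range_range_eq {R : Type*} [CommSemiring R] (k l : ℕ)
    (M : ℕ → ℕ → R) :
    ∑ i ∈ Finset.range k, ∑ j ∈ Finset.range l,
        M i j * ∑ a ∈ Finset.range i, ∑ b ∈ Finset.range j, M a b
      = ∑ i ∈ Finset.range k, ∑ i' ∈ Finset.Ioo i k, ∑ j ∈ Finset.range l,
          ∑ j' ∈ Finset.Ioo j l, M i j * M i' j' := by
  simp_rw [← Finset.sum_range_sum_range_eq_sum_sum_Ioo, Finset.mul_sum]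
  refine Finset.sum_congr rfl fun i _ => ?_
  rw [Finset.sum_comm]
  exact Finset.sum_congr rfl fun a _ => Finset.sum_congr rfl fun j _ =>
    Finset.sum_congr rfl fun b _ => mul_comm _ _

def IsStrictlyCompatible {R V : Type*} [Semiring R] [AddCommMonoid V] [Module R V] {k : ℕ}
    (N : Module.End R V) (F : Fin (k + 1) → Submodule R V) : Prop :=
  ∀ i : Fin k, ∀ x ∈ F i.succ, N x ∈ F i.castSucc

section StrictlyCompatible

variable {R V : Type*} [Semiring R] [AddCommMonoid V] [Module R V] {k : ℕ}
  {F : Fin (k + 1) → Submodule R V}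

theorem IsStrictlyCompatible.isNilpotent {N : Module.End R V} (hN : IsStrictlyCompatible N F)
    (h0 : F 0 = ⊥) (htop : F (Fin.last k) = ⊤) : IsNilpotent N := by
  have hker : ∀ i : Fin (k + 1), F i ≤ LinearMap.ker (N ^ (i : ℕ)) := by
    intro i
    induction i using Fin.induction with
    | zero => simp [h0]
    | succ i ih =>
      intro x hx
      rw [LinearMap.mem_ker, Fin.val_succ, pow_succ, Module.End.mul_apply]
      exact ih (hN i x hx)
  exact ⟨k, LinearMap.ker_eq_top.1 (top_le_iff.1 (htop ▸ hker (Fin.last k)))⟩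

theorem isStrictlyCompatible_iff_of_eq_span {ι : Type*} (hF : Monotone F) {e : ι → V}
    {ρ : ι → Fin k} (hspan : ∀ i : Fin (k + 1), F i = span R (e '' {x | (ρ x : ℕ) < i}))
    (N : Module.End R V) :
    IsStrictlyCompatible N F ↔ ∀ x, N (e x) ∈ F (ρ x).castSucc := by
  refine ⟨fun hN x => hN (ρ x) (e x) ?_, fun hN i => ?_⟩
  · rw [hspan]
    exact subset_span (Set.mem_image_of_mem e (Nat.lt_add_one _))
  · rw [hspan i.succ]
    refine span_le (p := (F i.castSucc).comap N) |>.2 ?_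
    rintro _ ⟨x, hx, rfl⟩
    have hle : (ρ x).castSucc ≤ i.castSucc :=
      Fin.castSucc_le_castSucc_iff.2 (Nat.lt_succ_iff.1 hx)
    exact mem_comap.2 (hF hle (hN x))

end StrictlyCompatible

-- `⟨(i, j), t⟩` indexes the `t`-th basis vector of the cell `(i, j)`; cells are 0-indexed,
-- so this vector lies in `F (i + 1) ⊓ F' (j + 1)`.
abbrev FlagCell (k l : ℕ) (M : ℕ → ℕ → ℕ) : Type :=
  Σ q : Fin k × Fin l, Fin (M q.1 q.2)

namespace FlagCell

variable {k l : ℕ} {M : ℕ → ℕ → ℕ}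

def below (i j : ℕ) : Set (FlagCell k l M) :=
  {x | (x.1.1 : ℕ) < i ∧ (x.1.2 : ℕ) < j}

theorem below_succ_succ (i : Fin k) (j : Fin l) :
    (below i.succ j.succ : Set (FlagCell k l M))
      = below i.castSucc j.succ ∪ below i.succ j.castSucc ∪ Set.range (Sigma.mk (i, j)) := by
  rw [Set.range_sigmaMk]
  ext ⟨⟨a, b⟩, t⟩
  simp only [below, Set.mem_ofPred_eq, Set.mem_union, Set.mem_preimage, Set.mem_singleton_iff,
    Prod.ext_iff, Fin.ext_iff, Fin.val_succ, Fin.val_castSucc]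
  omega

theorem sum_eq_sum_range (g : ℕ → ℕ → ℕ) :
    ∑ x : FlagCell k l M, g x.1.1 x.1.2
      = ∑ i ∈ Finset.range k, ∑ j ∈ Finset.range l, M i j * g i j := by
  rw [Fintype.sum_sigma, Fintype.sum_prod_type]
  simp only [Finset.sum_const, Finset.card_univ, Fintype.card_fin, smul_eq_mul]
  rw [← Fin.sum_univ_eq_sum_range]
  exact Finset.sum_congr rfl fun i _ => Fin.sum_univ_eq_sum_range (fun j => M i j * g i j) l

theorem card_eq_sum_range :
    Fintype.card (FlagCell k l M) = ∑ i ∈ Finset.range k, ∑ j ∈ Finset.range l, M i j := by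
  simpa using sum_eq_sum_range (k := k) (l := l) (M := M) fun _ _ => 1

end FlagCell

section FlagPair

variable {𝕜 V : Type*} [DivisionRing 𝕜] [AddCommGroup V] [Module 𝕜 V]
  {k l : ℕ} {F : Fin (k + 1) → Submodule 𝕜 V} {F' : Fin (l + 1) → Submodule 𝕜 V}
  {M : ℕ → ℕ → ℕ}

theorem finrank_inf_succ_succ_eq_finrank_sup_add [FiniteDimensional 𝕜 V] (hF : Monotone F)
    (hF' : Monotone F')
    (hrel : ∀ i j, finrank 𝕜 (F i ⊓ F' j : Submodule 𝕜 V)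
      = ∑ a ∈ Finset.range i, ∑ b ∈ Finset.range j, M a b) (i : Fin k) (j : Fin l) :
    finrank 𝕜 (F i.succ ⊓ F' j.succ : Submodule 𝕜 V)
      = finrank 𝕜 (F i.castSucc ⊓ F' j.succ ⊔ F i.succ ⊓ F' j.castSucc : Submodule 𝕜 V)
        + M i j := by
  have hinf : F i.castSucc ⊓ F' j.succ ⊓ (F i.succ ⊓ F' j.castSucc)
      = F i.castSucc ⊓ F' j.castSucc := by
    rw [inf_inf_inf_comm, inf_eq_left.2 (hF (Fin.castSucc_le_succ i)),
      inf_eq_right.2 (hF' (Fin.castSucc_le_succ j))]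
  have hmod := finrank_sup_add_finrank_inf_eq (F i.castSucc ⊓ F' j.succ)
    (F i.succ ⊓ F' j.castSucc)
  rw [hinf] at hmod
  simp only [hrel, Fin.val_succ, Fin.val_castSucc, Finset.sum_range_succ] at hmod ⊢
  omega

theorem span_image_below_eq {e : FlagCell k l M → V}
    (he : ∀ (i : Fin k) (j : Fin l), F i.castSucc ⊓ F' j.succ ⊔ F i.succ ⊓ F' j.castSucc
      ⊔ span 𝕜 (Set.range fun t => e ⟨(i, j), t⟩) = F i.succ ⊓ F' j.succ)
    (hF0 : F 0 = ⊥) (hF'0 : F' 0 = ⊥) (i : Fin (k + 1)) (j : Fin (l + 1)) :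
    span 𝕜 (e '' FlagCell.below i j) = F i ⊓ F' j := by
  induction i using Fin.induction generalizing j with
  | zero => simp [FlagCell.below, hF0]
  | succ i ih =>
    induction j using Fin.induction with
    | zero => simp [FlagCell.below, hF'0]
    | succ j ihj =>
      rw [FlagCell.below_succ_succ, Set.image_union, Set.image_union, span_union, span_union,
        ← Set.range_comp, ih, ihj]
      exact he i j

theorem exists_basis_span_image_below_eq [FiniteDimensional 𝕜 V] (hF : Monotone F)
    (hF' : Monotone F') (hF0 : F 0 = ⊥) (hF'0 : F' 0 = ⊥) (hFtop : F (Fin.last k) = ⊤)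
    (hF'top : F' (Fin.last l) = ⊤)
    (hrel : ∀ i j, finrank 𝕜 (F i ⊓ F' j : Submodule 𝕜 V)
      = ∑ a ∈ Finset.range i, ∑ b ∈ Finset.range j, M a b) :
    ∃ b : Basis (FlagCell k l M) 𝕜 V,
      ∀ (i : Fin (k + 1)) (j : Fin (l + 1)),
        span 𝕜 (b '' FlagCell.below i j) = F i ⊓ F' j := by
  choose e he using fun q : Fin k × Fin l => exists_sup_span_range_eq
    (sup_le (inf_le_inf_right _ (hF (Fin.castSucc_le_succ q.1)))
      (inf_le_inf_left _ (hF' (Fin.castSucc_le_succ q.2))))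
    (finrank_inf_succ_succ_eq_finrank_sup_add hF hF' hrel q.1 q.2)
  have hspan := span_image_below_eq (e := fun x => e x.1 x.2) (fun i j => he (i, j)) hF0 hF'0
  have hall : FlagCell.below (Fin.last k) (Fin.last l) = (Set.univ : Set (FlagCell k l M)) :=
    Set.eq_univ_of_forall fun x => ⟨x.1.1.isLt, x.1.2.isLt⟩
  have htop : ⊤ ≤ span 𝕜 (Set.range fun x : FlagCell k l M => e x.1 x.2) := by
    rw [← Set.image_univ, ← hall, hspan, hFtop, hF'top, inf_top_eq]
  have hcard : Fintype.card (FlagCell k l M) = finrank 𝕜 V := by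
    have hdim := hrel (Fin.last k) (Fin.last l)
    rw [hFtop, hF'top, inf_top_eq, finrank_top, Fin.val_last, Fin.val_last] at hdim
    rw [FlagCell.card_eq_sum_range, hdim]
  refine ⟨basisOfTopLeSpanOfCardEqFinrank _ htop hcard, ?_⟩
  rw [coe_basisOfTopLeSpanOfCardEqFinrank]
  exact hspan

theorem isStrictlyCompatible_and_iff (hF : Monotone F) (hF' : Monotone F')
    (hFtop : F (Fin.last k) = ⊤) (hF'top : F' (Fin.last l) = ⊤) {e : FlagCell k l M → V}
    (he : ∀ (i : Fin (k + 1)) (j : Fin (l + 1)),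
      span 𝕜 (e '' FlagCell.below i j) = F i ⊓ F' j)
    (N : Module.End 𝕜 V) :
    IsStrictlyCompatible N F ∧ IsStrictlyCompatible N F'
      ↔ ∀ x : FlagCell k l M, N (e x) ∈ F x.1.1.castSucc ⊓ F' x.1.2.castSucc := by
  simp only [mem_inf, forall_and]
  refine and_congr (isStrictlyCompatible_iff_of_eq_span hF (fun i => ?_) N)
    (isStrictlyCompatible_iff_of_eq_span hF' (fun j => ?_) N)
  · simpa [FlagCell.below, hF'top] using (he i (Fin.last l)).symm
  · simpa [FlagCell.below, hFtop] using (he (Fin.last k) j).symm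

end FlagPair

theorem stmt_14_general (𝕜 : Type*) [Field 𝕜] (n k l : ℕ)
    (M : ℕ → ℕ → ℕ)
    (Fl : Fin (k + 1) → Submodule 𝕜 (Fin n → 𝕜))
    (hFmono : Monotone Fl) (hF0 : Fl 0 = ⊥) (hFtop : Fl (Fin.last k) = ⊤)
    (Fl' : Fin (l + 1) → Submodule 𝕜 (Fin n → 𝕜))
    (hF'mono : Monotone Fl') (hF'0 : Fl' 0 = ⊥) (hF'top : Fl' (Fin.last l) = ⊤)
    (hrel : ∀ (i : Fin (k + 1)) (j : Fin (l + 1)),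
        Module.finrank 𝕜 ((Fl i ⊓ Fl' j : Submodule 𝕜 (Fin n → 𝕜)))
          = ∑ i' ∈ Finset.range (i : ℕ), ∑ j' ∈ Finset.range (j : ℕ), M i' j') :
    ∃ p : Submodule 𝕜 ((Fin n → 𝕜) →ₗ[𝕜] (Fin n → 𝕜)),
      (∀ N : (Fin n → 𝕜) →ₗ[𝕜] (Fin n → 𝕜), N ∈ p ↔
        (IsNilpotent N ∧
          (∀ i : Fin k, ∀ x ∈ Fl i.succ, N x ∈ Fl i.castSucc) ∧
          (∀ j : Fin l, ∀ x ∈ Fl' j.succ, N x ∈ Fl' j.castSucc))) ∧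
      Module.finrank 𝕜 p
        = ∑ i ∈ Finset.range k, ∑ i' ∈ Finset.Ioo i k, ∑ j ∈ Finset.range l,
            ∑ j' ∈ Finset.Ioo j l, M i j * M i' j' := by
  obtain ⟨b, hb⟩ := exists_basis_span_image_below_eq hFmono hF'mono hF0 hF'0 hFtop hF'top hrel
  let W : FlagCell k l M → Submodule 𝕜 (Fin n → 𝕜) :=
    fun x => Fl x.1.1.castSucc ⊓ Fl' x.1.2.castSucc
  refine ⟨(Submodule.pi Set.univ W).map (b.constr 𝕜).toLinearMap, fun N => ?_, ?_⟩
  · rw [b.mem_map_constr_pi, ← isStrictlyCompatible_and_iff hFmono hF'mono hFtop hF'top hb]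
    exact ⟨fun h => ⟨h.1.isNilpotent hF0 hFtop, h⟩, And.right⟩
  · rw [b.finrank_map_constr_pi, ← sum_mul_sum_range_range_eq]
    simp only [W, hrel, Fin.val_castSucc]
    exact FlagCell.sum_eq_sum_range fun i j =>
      ∑ a ∈ Finset.range i, ∑ b ∈ Finset.range j, M a b

/-- Let `F, F'` be partial flags of types `α, β` in `𝕜^n` with relative position `M`
(i.e. `dim(F_i ∩ F'_j) = ∑_{i'≤i, j'≤j} M_{i',j'}`).  Then the set of nilpotent
endomorphisms `N` strictly compatible with both `F` and `F'` (i.e. `N(F_i) ⊆ F_{i−1}`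
and `N(F'_j) ⊆ F'_{j−1}`) is a linear subspace of the endomorphism space of dimension
`∑_{i < i', j < j'} M_{i,j} M_{i',j'}`. -/
theorem stmt_14 (𝕜 : Type*) [Field 𝕜] (n k l : ℕ) (α β : ℕ → ℕ)
    (hαsupp : ∀ i, k ≤ i → α i = 0) (hαsum : ∑ i ∈ Finset.range k, α i = n)
    (hβsupp : ∀ j, l ≤ j → β j = 0) (hβsum : ∑ j ∈ Finset.range l, β j = n)
    (M : ℕ → ℕ → ℕ) (hMsupp : ∀ i j, k ≤ i ∨ l ≤ j → M i j = 0)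
    (hMrow : ∀ i, ∑ j ∈ Finset.range l, M i j = α i)
    (hMcol : ∀ j, ∑ i ∈ Finset.range k, M i j = β j)
    (Fl : Fin (k + 1) → Submodule 𝕜 (Fin n → 𝕜))
    (hFmono : Monotone Fl) (hF0 : Fl 0 = ⊥) (hFtop : Fl (Fin.last k) = ⊤)
    (hFdim : ∀ i : Fin (k + 1), Module.finrank 𝕜 (Fl i) = ∑ r ∈ Finset.range (i : ℕ), α r)
    (Fl' : Fin (l + 1) → Submodule 𝕜 (Fin n → 𝕜))
    (hF'mono : Monotone Fl') (hF'0 : Fl' 0 = ⊥) (hF'top : Fl' (Fin.last l) = ⊤)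
    (hF'dim : ∀ j : Fin (l + 1), Module.finrank 𝕜 (Fl' j) = ∑ r ∈ Finset.range (j : ℕ), β r)
    (hrel : ∀ (i : Fin (k + 1)) (j : Fin (l + 1)),
        Module.finrank 𝕜 ((Fl i ⊓ Fl' j : Submodule 𝕜 (Fin n → 𝕜)))
          = ∑ i' ∈ Finset.range (i : ℕ), ∑ j' ∈ Finset.range (j : ℕ), M i' j') :
    ∃ p : Submodule 𝕜 ((Fin n → 𝕜) →ₗ[𝕜] (Fin n → 𝕜)),
      (∀ N : (Fin n → 𝕜) →ₗ[𝕜] (Fin n → 𝕜), N ∈ p ↔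
        (IsNilpotent N ∧
          (∀ i : Fin k, ∀ x ∈ Fl i.succ, N x ∈ Fl i.castSucc) ∧
          (∀ j : Fin l, ∀ x ∈ Fl' j.succ, N x ∈ Fl' j.castSucc))) ∧
      Module.finrank 𝕜 p
        = ∑ i ∈ Finset.range k, ∑ i' ∈ Finset.Ioo i k, ∑ j ∈ Finset.range l,
            ∑ j' ∈ Finset.Ioo j l, M i j * M i' j' :=
  stmt_14_general 𝕜 n k l M Fl hFmono hF0 hFtop Fl' hF'mono hF'0 hF'top hrel
end

section
/- Let α, β be weak compositions of n and M a k × l nonnegative-integer matrix of type (α, β). Over F_q (set t = 1/q), the number of triples (F, F', N) where F is a partial flag of type α, F' a partial flag of type β, (F, F') has relative position M, and N is a nilpotent endomorphism strictly compatible with both F and F', equals t^{−n² + n + n(α) + n(β)} · [n]_t! / ∏_{i,j} [M_{i,j}]_t!, where n(γ) = Σ_i binomial(γ_i, 2). -/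
/-!
Double counting. Group the vectors of a basis `v` into the cells `(i, j)` of `M`, `M i j` vectors
per cell. Such a basis determines the flags `F_i = span {v_p | row p < i}` and
`F'_j = span {v_p | col p < j}`, which are in relative position `M`, and the strictly compatible
`N` are exactly the maps sending each `v_p` into `F_{row p} ∩ F'_{col p}`; they are automatically
nilpotent. Conversely, given a triple, call `v` adapted to its flags if the vectors of cell `(i, j)`
lie in `F_{i+1} ∩ F'_{j+1}` and are independent modulo `F_i ∩ F'_{j+1} + F_{i+1} ∩ F'_j`; by
induction over the cells such a `v` spans every `F_i ∩ F'_j`, so it is a basis inducing the flags.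
The number of adapted `v` is a product of local counts depending only on `M`, so counting pairs
(triple, adapted basis) both ways gives the number of triples; the `t`-powers are collected by
`∑ d_{i+1,j+1} M_{ij} = ∑ d_{ij} M_{ij} + n + n(α) + n(β)`, where `d_{ij} = dim (F_i ∩ F'_j)`.
-/

/-- The `t`-factorial `[m]_t!`. -/
def qFac (t : ℚ) (m : ℕ) : ℚ := ∏ j ∈ Finset.range m, ∑ i ∈ Finset.range (j + 1), t ^ i

open Finset Module Submodule

theorem Nat.card_subtype_comp_eq_mul_pow {ι α β : Type*} [Fintype ι] [Finite α] [Finite β]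
    (f : α → β) {c : ℕ} (hf : ∀ y, Nat.card {x // f x = y} = c) (P : (ι → β) → Prop) :
    Nat.card {w : ι → α // P (f ∘ w)} = Nat.card {u // P u} * c ^ Fintype.card ι := by
  let g : {w : ι → α // P (f ∘ w)} → {u // P u} := fun w => ⟨f ∘ w.1, w.2⟩
  have hfiber (u : {u // P u}) : {w // g w = u} ≃ ∀ i, {x // f x = u.1 i} :=
    { toFun := fun w i => ⟨w.1.1 i, congrFun (congrArg Subtype.val w.2) i⟩
      invFun := fun x => ⟨⟨fun i => (x i).1, by
          convert u.2 using 1; exact funext fun i => (x i).2⟩,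
        Subtype.ext (funext fun i => (x i).2)⟩
      left_inv := fun _ => rfl
      right_inv := fun _ => rfl }
  have := Fintype.ofFinite {u // P u}
  rw [← Nat.card_congr (Equiv.sigmaFiberEquiv g), Nat.card_sigma]
  simp [Nat.card_congr (hfiber _), Nat.card_pi, hf]

theorem Nat.add_choose_two (a b : ℕ) : (a + b).choose 2 = a.choose 2 + a * b + b.choose 2 := by
  induction b with
  | zero => simp
  | succ b ih =>
    rw [← add_assoc, Nat.choose_succ_succ, Nat.choose_succ_succ b, ih, Nat.choose_one_right,
      Nat.choose_one_right]
    ring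

theorem Nat.mul_self_eq_two_mul_choose_two_add (a : ℕ) : a * a = 2 * a.choose 2 + a := by
  induction a with
  | zero => rfl
  | succ a ih => rw [Nat.add_choose_two, mul_one, Nat.choose_eq_zero_of_lt one_lt_two]; linarith

theorem Nat.choose_two_sum_range (a : ℕ → ℕ) (L : ℕ) :
    (∑ j ∈ range L, a j).choose 2
      = ∑ j ∈ range L, ((∑ j' ∈ range j, a j') * a j + (a j).choose 2) := by
  induction L with
  | zero => simp
  | succ L ih => rw [sum_range_succ, Nat.add_choose_two, ih, sum_range_succ]; ring

@[to_additive]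
theorem prod_univ_fin_prod_eq_prod_range {R : Type*} [CommMonoid R] {k l : ℕ} (f : ℕ → ℕ → R) :
    ∏ c : Fin k × Fin l, f c.1 c.2 = ∏ i ∈ range k, ∏ j ∈ range l, f i j := by
  rw [Fintype.prod_prod_type, ← Fin.prod_univ_eq_prod_range (fun i => ∏ j ∈ range l, f i j)]
  exact prod_congr rfl fun i _ => Fin.prod_univ_eq_prod_range (f i) l

theorem qFac_pos {t : ℚ} (ht : 0 < t) (m : ℕ) : 0 < qFac t m :=
  prod_pos fun _ _ => sum_pos (fun i _ => pow_pos ht i) ⟨0, by simp⟩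

theorem qFac_mul_one_sub_pow (t : ℚ) (m : ℕ) :
    qFac t m * (1 - t) ^ m = ∏ j ∈ range m, (1 - t ^ (j + 1)) := by
  have hconst : (1 - t) ^ m = ∏ _j ∈ range m, (1 - t) := by rw [prod_const, card_range]
  rw [qFac, hconst, ← prod_mul_distrib]
  refine prod_congr rfl fun j _ => ?_
  linear_combination (-1 : ℚ) * geom_sum_mul t (j + 1)

theorem cast_prod_pow_sub_pow {q : ℕ} (hq : 0 < q) (w m : ℕ) :
    ((∏ s ∈ range m, (q ^ (w + m) - q ^ (w + s)) : ℕ) : ℚ)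
      = (q : ℚ) ^ ((w + m) * m) * ((1 - (q : ℚ)⁻¹) ^ m * qFac (q : ℚ)⁻¹ m) := by
  have hq0 : (q : ℚ) ≠ 0 := by positivity
  have hfactor : ∀ s ∈ range m, ((q ^ (w + m) - q ^ (w + s) : ℕ) : ℚ)
      = (q : ℚ) ^ (w + m) * (1 - (q : ℚ)⁻¹ ^ (m - 1 - s + 1)) := by
    intro s hs
    have hs : s < m := mem_range.mp hs
    rw [Nat.cast_sub (Nat.pow_le_pow_right hq (by omega)), mul_sub, mul_one, inv_pow,
      show w + m = w + s + (m - 1 - s + 1) by omega, pow_add]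
    push_cast
    field_simp
    ring
  rw [Nat.cast_prod, prod_congr rfl hfactor, prod_mul_distrib, prod_const, card_range, ← pow_mul,
    prod_range_reflect (fun j => 1 - (q : ℚ)⁻¹ ^ (j + 1)), ← qFac_mul_one_sub_pow,
    mul_comm (qFac _ _)]

theorem LinearIndependent.span_image_inf_span_image {F ι V : Type*} [Field F] [AddCommGroup V]
    [Module F V] {v : ι → V} (hv : LinearIndependent F v) (s t : Set ι) :
    span F (v '' s) ⊓ span F (v '' t) = span F (v '' (s ∩ t)) := by
  have hdisj : span F (v '' t) ⊓ span F (v '' (s \ t)) = ⊥ :=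
    disjoint_iff.mp (hv.disjoint_span_image Set.disjoint_sdiff_right)
  have hsplit : span F (v '' s) = span F (v '' (s \ t)) ⊔ span F (v '' (s ∩ t)) := by
    rw [← span_union, ← Set.image_union, Set.sdiff_union_inter]
  rw [hsplit, inf_comm, ← inf_sup_assoc_of_le _ (span_mono (Set.image_mono Set.inter_subset_right)),
    hdisj, bot_sup_eq]

theorem Module.Basis.natCard_linearMap_apply_mem {ι F V W : Type*} [Fintype ι] [Field F]
    [AddCommGroup V] [Module F V] [AddCommGroup W] [Module F W] (b : Basis ι F V)
    (S : ι → Submodule F W) :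
    Nat.card {N : V →ₗ[F] W // ∀ i, N (b i) ∈ S i} = ∏ i, Nat.card (S i) := by
  rw [← Nat.card_pi]
  exact Nat.card_congr (((b.constr F).toEquiv.symm.subtypeEquiv fun N => by simp).trans
    Equiv.subtypePiEquivPi)

section QuotientCounting

variable {F V : Type*} [Field F] [AddCommGroup V] [Module F V]

theorem Submodule.natCard_eq_pow_finrank [Fintype F] [FiniteDimensional F V]
    (S : Submodule F V) : Nat.card S = Fintype.card F ^ finrank F S := by
  rw [Module.natCard_eq_pow_finrank (K := F), Nat.card_eq_fintype_card]

theorem Submodule.natCard_fiber_mkQ (W : Submodule F V) (y : V ⧸ W) :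
    Nat.card {x // W.mkQ x = y} = Nat.card W := by
  obtain ⟨x₀, rfl⟩ := W.mkQ_surjective y
  exact Nat.card_congr <| (Equiv.subRight x₀).subtypeEquiv fun x => by
    simp [Submodule.Quotient.eq]

theorem card_linearIndependent_mkQ_comp [Fintype F] [Finite V] (W : Submodule F V) {m : ℕ}
    (h : finrank F W + m = finrank F V) :
    Nat.card {w : Fin m → V // LinearIndependent F (W.mkQ ∘ w)} =
      ∏ s ∈ range m, (Fintype.card F ^ finrank F V - Fintype.card F ^ (finrank F W + s)) := by
  have hquot : finrank F (V ⧸ W) = m := by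
    have := W.finrank_quotient_add_finrank; omega
  have : Finite (V ⧸ W) := Finite.of_surjective _ W.mkQ_surjective
  have hfactor (s : ℕ) : Fintype.card F ^ (finrank F W + m) - Fintype.card F ^ (finrank F W + s)
      = (Fintype.card F ^ m - Fintype.card F ^ s) * Fintype.card F ^ finrank F W := by
    rw [Nat.sub_mul, ← pow_add, ← pow_add, add_comm m, add_comm s]
  rw [Nat.card_subtype_comp_eq_mul_pow (ι := Fin m) W.mkQ W.natCard_fiber_mkQ
      (fun u => LinearIndependent F u),
    card_linearIndependent hquot.ge, W.natCard_eq_pow_finrank, hquot, Fintype.card_fin,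
    Fin.prod_univ_eq_prod_range (fun s => Fintype.card F ^ m - Fintype.card F ^ s), ← h]
  simp_rw [hfactor, ← prod_mul_pow_card, card_range]

theorem card_mem_linearIndependent_mkQ_comp [Fintype F] [Finite V] {W E : Submodule F V}
    (hWE : W ≤ E) {m : ℕ} (h : finrank F W + m = finrank F E) :
    Nat.card {w : Fin m → V // (∀ s, w s ∈ E) ∧ LinearIndependent F (W.mkQ ∘ w)} =
      ∏ s ∈ range m, (Fintype.card F ^ finrank F E - Fintype.card F ^ (finrank F W + s)) := by
  set W' := W.comap E.subtype
  have hW' : finrank F W' = finrank F W := (comapSubtypeEquivOfLe hWE).finrank_eq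
  have hmkQ (w : Fin m → E) :
      LinearIndependent F (W.mkQ ∘ E.subtype ∘ w) ↔ LinearIndependent F (W'.mkQ ∘ w) := by
    have hfactor : W.mkQ ∘ E.subtype ∘ w = W'.mapQ W E.subtype le_rfl ∘ W'.mkQ ∘ w := rfl
    rw [hfactor, LinearMap.linearIndependent_iff _ (by rw [ker_mapQ, mkQ_map_self])]
  let e : {w : Fin m → E // LinearIndependent F (W'.mkQ ∘ w)} ≃
      {w : Fin m → V // (∀ s, w s ∈ E) ∧ LinearIndependent F (W.mkQ ∘ w)} :=
    { toFun := fun w => ⟨E.subtype ∘ w.1, fun s => (w.1 s).2, (hmkQ w.1).mpr w.2⟩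
      invFun := fun w => ⟨fun s => ⟨w.1 s, w.2.1 s⟩, (hmkQ _).mp w.2.2⟩
      left_inv := fun _ => rfl
      right_inv := fun _ => rfl }
  rw [← Nat.card_congr e, card_linearIndependent_mkQ_comp W' (by rw [hW', h]), hW']

theorem le_sup_span_range_of_linearIndependent_mkQ_comp [FiniteDimensional F V]
    {W E : Submodule F V} (hWE : W ≤ E) {m : ℕ} {w : Fin m → V} (hwE : ∀ s, w s ∈ E)
    (hw : LinearIndependent F (W.mkQ ∘ w))
    (h : finrank F W + m = finrank F E) : E ≤ W ⊔ span F (Set.range w) := by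
  have hdisj : W ⊓ span F (Set.range w) = ⊥ := by
    simpa [disjoint_iff, inf_comm] using Submodule.range_ker_disjoint hw
  have hdim := finrank_sup_add_finrank_inf_eq W (span F (Set.range w))
  rw [hdisj, finrank_bot, finrank_span_eq_card (hw.of_comp _), Fintype.card_fin] at hdim
  refine (eq_of_le_of_finrank_eq (sup_le hWE ?_) (by omega)).ge
  exact span_le.mpr (Set.range_subset_iff.mpr hwE)

end QuotientCounting

section CornerSum

variable {k l : ℕ} {α β : ℕ → ℕ} {M : ℕ → ℕ → ℕ}

-- `dim (F_i ∩ F'_j)` for flags in relative position `M`.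
def cornerSum (M : ℕ → ℕ → ℕ) (i j : ℕ) : ℕ := ∑ i' ∈ range i, ∑ j' ∈ range j, M i' j'

@[simp] theorem cornerSum_zero_left (M : ℕ → ℕ → ℕ) (j : ℕ) : cornerSum M 0 j = 0 := rfl

@[simp] theorem cornerSum_zero_right (M : ℕ → ℕ → ℕ) (i : ℕ) : cornerSum M i 0 = 0 := by
  simp [cornerSum]

theorem cornerSum_succ_left (M : ℕ → ℕ → ℕ) (i j : ℕ) :
    cornerSum M (i + 1) j = cornerSum M i j + ∑ j' ∈ range j, M i j' :=
  sum_range_succ _ _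

theorem cornerSum_succ_right (M : ℕ → ℕ → ℕ) (i j : ℕ) :
    cornerSum M i (j + 1) = cornerSum M i j + ∑ i' ∈ range i, M i' j := by
  simp only [cornerSum, sum_range_succ, sum_add_distrib]

theorem cornerSum_succ_succ (M : ℕ → ℕ → ℕ) (i j : ℕ) :
    cornerSum M (i + 1) (j + 1) + cornerSum M i j
      = cornerSum M i (j + 1) + cornerSum M (i + 1) j + M i j := by
  simp only [cornerSum, sum_range_succ, sum_add_distrib]
  ring

theorem cornerSum_eq_sum_row (hMrow : ∀ i, ∑ j ∈ range l, M i j = α i) (i : ℕ) :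
    cornerSum M i l = ∑ s ∈ range i, α s :=
  sum_congr rfl fun s _ => hMrow s

theorem cornerSum_eq_sum_col (hMcol : ∀ j, ∑ i ∈ range k, M i j = β j) (j : ℕ) :
    cornerSum M k j = ∑ s ∈ range j, β s := by
  rw [cornerSum, sum_comm]
  exact sum_congr rfl fun s _ => hMcol s

theorem sum_cornerSum_succ_mul (hMrow : ∀ i, ∑ j ∈ range l, M i j = α i)
    (hMcol : ∀ j, ∑ i ∈ range k, M i j = β j) :
    ∑ i ∈ range k, ∑ j ∈ range l, cornerSum M (i + 1) (j + 1) * M i j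
      = ∑ i ∈ range k, ∑ j ∈ range l, cornerSum M i j * M i j + ∑ i ∈ range k, α i
        + ∑ i ∈ range k, (α i).choose 2 + ∑ j ∈ range l, (β j).choose 2 := by
  have hcell (i j : ℕ) : cornerSum M (i + 1) (j + 1) * M i j
      = cornerSum M i j * M i j + M i j
        + ((∑ j' ∈ range j, M i j') * M i j + (M i j).choose 2)
        + ((∑ i' ∈ range i, M i' j) * M i j + (M i j).choose 2) := by
    rw [cornerSum_succ_left, cornerSum_succ_right, sum_range_succ]
    linarith [Nat.mul_self_eq_two_mul_choose_two_add (M i j)]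
  have hα : ∑ i ∈ range k, (α i).choose 2
      = ∑ i ∈ range k, ∑ j ∈ range l, ((∑ j' ∈ range j, M i j') * M i j + (M i j).choose 2) :=
    sum_congr rfl fun i _ => by rw [← hMrow, Nat.choose_two_sum_range]
  have hβ : ∑ j ∈ range l, (β j).choose 2
      = ∑ i ∈ range k, ∑ j ∈ range l, ((∑ i' ∈ range i, M i' j) * M i j + (M i j).choose 2) := by
    rw [sum_comm]
    exact sum_congr rfl fun j _ => by rw [← hMcol, Nat.choose_two_sum_range]
  rw [hα, hβ, ← sum_congr rfl fun i _ => hMrow i]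
  simp only [hcell, sum_add_distrib]

-- The index set of a basis adapted to a pair of flags in relative position `M`.
abbrev Slot (k l : ℕ) (M : ℕ → ℕ → ℕ) : Type := Σ c : Fin k × Fin l, Fin (M c.1 c.2)

theorem card_slot_lt {k l : ℕ} (M : ℕ → ℕ → ℕ) {i j : ℕ} (hi : i ≤ k) (hj : j ≤ l) :
    Nat.card {p : Slot k l M // (p.1.1 : ℕ) < i ∧ (p.1.2 : ℕ) < j} = cornerSum M i j := by
  rw [Nat.card_congr (Equiv.subtypeSigmaEquiv (fun c : Fin k × Fin l => Fin (M c.1 c.2))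
    (fun c => (c.1 : ℕ) < i ∧ (c.2 : ℕ) < j)), Nat.card_sigma]
  simp only [Nat.card_eq_fintype_card, Fintype.card_fin]
  rw [← Fintype.sum_equiv (((Fin.castLEquiv hi).prodCongr (Fin.castLEquiv hj)).trans
    Equiv.subtypeProdEquivProd.symm) (fun c => M c.1 c.2) _ (fun _ => rfl),
    Fintype.sum_prod_type, Fin.sum_univ_eq_sum_range (fun i' => ∑ j' : Fin j, M i' j'),
    cornerSum]
  exact sum_congr rfl fun i' _ => Fin.sum_univ_eq_sum_range (M i') j

theorem card_slot {k l : ℕ} (M : ℕ → ℕ → ℕ) : Fintype.card (Slot k l M) = cornerSum M k l := by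
  rw [← card_slot_lt M le_rfl le_rfl, Nat.card_congr (Equiv.subtypeUnivEquiv fun p =>
    ⟨p.1.1.isLt, p.1.2.isLt⟩), Nat.card_eq_fintype_card]

end CornerSum

section BlockSpan

variable (F : Type*) {V : Type*} [Field F] [AddCommGroup V] [Module F V] {k l : ℕ}
  {M : ℕ → ℕ → ℕ}

def blockSpan (v : Slot k l M → V) (i j : ℕ) : Submodule F V :=
  span F (v '' {p | (p.1.1 : ℕ) < i ∧ (p.1.2 : ℕ) < j})

variable {F}

theorem blockSpan_mono (v : Slot k l M → V) {i i' j j' : ℕ} (hi : i ≤ i') (hj : j ≤ j') :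
    blockSpan F v i j ≤ blockSpan F v i' j' :=
  span_mono (Set.image_mono fun _ hp => ⟨hp.1.trans_le hi, hp.2.trans_le hj⟩)

@[simp] theorem blockSpan_zero_left (v : Slot k l M → V) (j : ℕ) : blockSpan F v 0 j = ⊥ := by
  simp [blockSpan]

@[simp] theorem blockSpan_zero_right (v : Slot k l M → V) (i : ℕ) : blockSpan F v i 0 = ⊥ := by
  simp [blockSpan]

theorem blockSpan_inf_blockSpan {v : Slot k l M → V} (hv : LinearIndependent F v)
    (i j i' j' : ℕ) :
    blockSpan F v i j ⊓ blockSpan F v i' j' = blockSpan F v (min i i') (min j j') := by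
  rw [blockSpan, blockSpan, hv.span_image_inf_span_image, blockSpan]
  congr 2
  ext p
  simp only [Set.mem_inter_iff, Set.mem_ofPred_eq, lt_min_iff]
  tauto

theorem finrank_blockSpan {v : Slot k l M → V} (hv : LinearIndependent F v) {i j : ℕ}
    (hi : i ≤ k) (hj : j ≤ l) : finrank F (blockSpan F v i j) = cornerSum M i j := by
  rw [blockSpan, Set.image_eq_range]
  refine (finrank_span_eq_card (hv.comp _ Subtype.val_injective)).trans ?_
  rw [← Nat.card_eq_fintype_card]
  exact card_slot_lt M hi hj

theorem blockSpan_eq_top [FiniteDimensional F V] {v : Slot k l M → V}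
    (hv : LinearIndependent F v) (hdim : cornerSum M k l = finrank F V) :
    blockSpan F v k l = ⊤ :=
  eq_top_of_finrank_eq ((finrank_blockSpan hv le_rfl le_rfl).trans hdim)

end BlockSpan

section Flags

variable {F V : Type*} [Field F] [AddCommGroup V] [Module F V] {k l : ℕ} {M : ℕ → ℕ → ℕ}

def StrictlyCompatible (FF : Fin (k + 1) → Submodule F V) (N : V →ₗ[F] V) : Prop :=
  ∀ i : Fin k, ∀ x ∈ FF i.succ, N x ∈ FF i.castSucc

theorem StrictlyCompatible.isNilpotent {FF : Fin (k + 1) → Submodule F V} {N : V →ₗ[F] V}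
    (hN : StrictlyCompatible FF N) (h0 : FF 0 = ⊥) (hlast : FF (Fin.last k) = ⊤) :
    IsNilpotent N := by
  have hpow (i : Fin (k + 1)) : ∀ x ∈ FF i, (N ^ (i : ℕ)) x = 0 := by
    induction i using Fin.induction with
    | zero => simp [h0]
    | succ i ih =>
      intro x hx
      rw [Fin.val_succ, pow_succ, Module.End.mul_apply]
      exact ih _ (hN i x hx)
  exact ⟨k, LinearMap.ext fun x => by simpa using hpow (Fin.last k) x (hlast ▸ mem_top)⟩

structure InRelativePosition (M : ℕ → ℕ → ℕ) (FF : Fin (k + 1) → Submodule F V)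
    (GG : Fin (l + 1) → Submodule F V) : Prop where
  monotone_left : Monotone FF
  monotone_right : Monotone GG
  left_last : FF (Fin.last k) = ⊤
  right_last : GG (Fin.last l) = ⊤
  finrank_inf : ∀ i j, finrank F (FF i ⊓ GG j : Submodule F V) = cornerSum M i j

theorem InRelativePosition.finrank_eq {FF : Fin (k + 1) → Submodule F V}
    {GG : Fin (l + 1) → Submodule F V} (h : InRelativePosition M FF GG) :
    finrank F V = cornerSum M k l := by
  have := h.finrank_inf (Fin.last k) (Fin.last l)
  rwa [h.left_last, h.right_last, top_inf_eq, finrank_top, Fin.val_last, Fin.val_last] at this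

def cellSpace (FF : Fin (k + 1) → Submodule F V) (GG : Fin (l + 1) → Submodule F V)
    (c : Fin k × Fin l) : Submodule F V :=
  FF c.1.succ ⊓ GG c.2.succ

def cellBoundary (FF : Fin (k + 1) → Submodule F V) (GG : Fin (l + 1) → Submodule F V)
    (c : Fin k × Fin l) : Submodule F V :=
  FF c.1.castSucc ⊓ GG c.2.succ ⊔ FF c.1.succ ⊓ GG c.2.castSucc

def IsAdapted (FF : Fin (k + 1) → Submodule F V) (GG : Fin (l + 1) → Submodule F V)
    (v : Slot k l M → V) : Prop :=
  ∀ c, (∀ s, v ⟨c, s⟩ ∈ cellSpace FF GG c) ∧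
    LinearIndependent F ((cellBoundary FF GG c).mkQ ∘ fun s => v ⟨c, s⟩)

variable (F) in
def rowFlag (v : Slot k l M → V) (i : Fin (k + 1)) : Submodule F V := blockSpan F v i l

variable (F) in
def colFlag (v : Slot k l M → V) (j : Fin (l + 1)) : Submodule F V := blockSpan F v k j

theorem rowFlag_inf_colFlag {v : Slot k l M → V} (hv : LinearIndependent F v)
    (i : Fin (k + 1)) (j : Fin (l + 1)) :
    rowFlag F v i ⊓ colFlag F v j = blockSpan F v i j := by
  rw [rowFlag, colFlag, blockSpan_inf_blockSpan hv, min_eq_left i.is_le, min_eq_right j.is_le]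

theorem isAdapted_rowFlag_colFlag {v : Slot k l M → V} (hv : LinearIndependent F v) :
    IsAdapted (rowFlag F v) (colFlag F v) v := by
  rintro c
  have hcell : Set.range (Sigma.mk c) = {p : Slot k l M | p.1 = c} := by
    ext p; exact ⟨by rintro ⟨s, rfl⟩; rfl, by rintro rfl; exact ⟨p.2, rfl⟩⟩
  refine ⟨fun s => ?_, ?_⟩
  · rw [cellSpace, rowFlag_inf_colFlag hv]
    exact subset_span ⟨⟨c, s⟩, by simp, rfl⟩
  · refine (hv.comp _ sigma_mk_injective).map ?_
    rw [ker_mkQ, cellBoundary, rowFlag_inf_colFlag hv, rowFlag_inf_colFlag hv, blockSpan,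
      blockSpan, ← span_union, ← Set.image_union, Set.range_comp, hcell]
    refine hv.disjoint_span_image (Set.disjoint_left.mpr ?_)
    rintro p rfl (h | h) <;> simp at h

theorem strictlyCompatible_rowFlag_colFlag_iff (v : Slot k l M → V) (N : V →ₗ[F] V) :
    StrictlyCompatible (rowFlag F v) N ∧ StrictlyCompatible (colFlag F v) N ↔
      ∀ p : Slot k l M, N (v p) ∈ blockSpan F v p.1.1 l ⊓ blockSpan F v k p.1.2 := by
  constructor
  · rintro ⟨hrow, hcol⟩ p
    exact ⟨hrow p.1.1 _ (subset_span ⟨p, ⟨by simp, p.1.2.isLt⟩, rfl⟩),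
      hcol p.1.2 _ (subset_span ⟨p, ⟨p.1.1.isLt, by simp⟩, rfl⟩)⟩
  · intro h
    refine ⟨fun i x hx => ?_, fun j x hx => ?_⟩
    · refine (span_le (p := (rowFlag F v i.castSucc).comap N)).mpr ?_ hx
      rintro _ ⟨p, hp, rfl⟩
      exact blockSpan_mono v (Nat.lt_succ_iff.mp hp.1) le_rfl (h p).1
    · refine (span_le (p := (colFlag F v j.castSucc).comap N)).mpr ?_ hx
      rintro _ ⟨p, hp, rfl⟩
      exact blockSpan_mono v le_rfl (Nat.lt_succ_iff.mp hp.2) (h p).2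

theorem cellBoundary_le_cellSpace {FF : Fin (k + 1) → Submodule F V}
    {GG : Fin (l + 1) → Submodule F V} (hFF : Monotone FF) (hGG : Monotone GG)
    (c : Fin k × Fin l) : cellBoundary FF GG c ≤ cellSpace FF GG c :=
  sup_le (inf_le_inf_right _ (hFF (Fin.castSucc_le_succ c.1)))
    (inf_le_inf_left _ (hGG (Fin.castSucc_le_succ c.2)))

variable [FiniteDimensional F V] {FF : Fin (k + 1) → Submodule F V}
  {GG : Fin (l + 1) → Submodule F V}

theorem InRelativePosition.finrank_cellBoundary_add (h : InRelativePosition M FF GG)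
    (c : Fin k × Fin l) :
    finrank F (cellBoundary FF GG c) + M c.1 c.2 = finrank F (cellSpace FF GG c) := by
  have hinf : (FF c.1.castSucc ⊓ GG c.2.succ) ⊓ (FF c.1.succ ⊓ GG c.2.castSucc)
      = FF c.1.castSucc ⊓ GG c.2.castSucc :=
    le_antisymm (le_inf (inf_le_left.trans inf_le_left) (inf_le_right.trans inf_le_right))
      (le_inf (inf_le_inf_left _ (h.monotone_right (Fin.castSucc_le_succ c.2)))
        (inf_le_inf_right _ (h.monotone_left (Fin.castSucc_le_succ c.1))))
  have hdim := finrank_sup_add_finrank_inf_eq (FF c.1.castSucc ⊓ GG c.2.succ)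
    (FF c.1.succ ⊓ GG c.2.castSucc)
  rw [hinf, h.finrank_inf, h.finrank_inf, h.finrank_inf] at hdim
  rw [cellBoundary, cellSpace, h.finrank_inf]
  simp only [Fin.val_succ, Fin.val_castSucc] at hdim ⊢
  have := cornerSum_succ_succ M c.1 c.2
  omega

theorem InRelativePosition.inf_le_blockSpan (h : InRelativePosition M FF GG)
    {v : Slot k l M → V} (hv : IsAdapted FF GG v) (i : Fin (k + 1)) (j : Fin (l + 1)) :
    FF i ⊓ GG j ≤ blockSpan F v i j := by
  have hzero {i : Fin (k + 1)} {j : Fin (l + 1)} (hij : cornerSum M i j = 0) :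
      FF i ⊓ GG j = ⊥ :=
    finrank_eq_zero.mp ((h.finrank_inf i j).trans hij)
  -- Each cell space is spanned by its boundary and the vectors of the cell.
  induction i using Fin.induction generalizing j with
  | zero => exact (hzero (i := 0) (j := j) (by simp)).trans_le bot_le
  | succ i ihi =>
    induction j using Fin.induction with
    | zero => exact (hzero (i := i.succ) (j := 0) (by simp)).trans_le bot_le
    | succ j ihj =>
      have hcell := le_sup_span_range_of_linearIndependent_mkQ_comp
        (cellBoundary_le_cellSpace h.monotone_left h.monotone_right (i, j)) (hv (i, j)).1
        (hv (i, j)).2 (h.finrank_cellBoundary_add (i, j))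
      refine hcell.trans (sup_le (sup_le ?_ ?_) (span_le.mpr ?_))
      · exact (ihi j.succ).trans (blockSpan_mono v (by simp) le_rfl)
      · exact ihj.trans (blockSpan_mono v le_rfl (by simp))
      · rintro _ ⟨s, rfl⟩
        exact subset_span ⟨⟨(i, j), s⟩, by simp, rfl⟩

variable {v : Slot k l M → V}

theorem InRelativePosition.rowFlag_eq (h : InRelativePosition M FF GG)
    (hv : IsAdapted FF GG v) : rowFlag F v = FF := by
  funext i
  refine le_antisymm (span_le.mpr ?_) ?_
  · rintro _ ⟨p, hp, rfl⟩
    exact h.monotone_left (Fin.le_def.mpr (Nat.succ_le_of_lt hp.1)) ((hv p.1).1 p.2).1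
  · simpa [rowFlag, h.right_last] using h.inf_le_blockSpan hv i (Fin.last l)

theorem InRelativePosition.colFlag_eq (h : InRelativePosition M FF GG)
    (hv : IsAdapted FF GG v) : colFlag F v = GG := by
  funext j
  refine le_antisymm (span_le.mpr ?_) ?_
  · rintro _ ⟨p, hp, rfl⟩
    exact h.monotone_right (Fin.le_def.mpr (Nat.succ_le_of_lt hp.2)) ((hv p.1).1 p.2).2
  · simpa [colFlag, h.left_last] using h.inf_le_blockSpan hv (Fin.last k) j

theorem InRelativePosition.linearIndependent (h : InRelativePosition M FF GG)
    (hv : IsAdapted FF GG v) : LinearIndependent F v := by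
  refine linearIndependent_of_top_le_span_of_card_eq_finrank ?_ (by rw [card_slot, h.finrank_eq])
  calc ⊤ = FF (Fin.last k) ⊓ GG (Fin.last l) := by simp [h.left_last, h.right_last]
    _ ≤ blockSpan F v k l := by simpa using h.inf_le_blockSpan hv (Fin.last k) (Fin.last l)
    _ ≤ span F (Set.range v) := span_mono (Set.image_subset_range _ _)

end Flags

section Counting

variable {F V : Type*} [Field F] [Fintype F] [AddCommGroup V] [Module F V] [Finite V] {k l : ℕ}
  {M : ℕ → ℕ → ℕ}

theorem natCard_strictlyCompatible {v : Slot k l M → V} (hv : LinearIndependent F v)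
    (hdim : cornerSum M k l = finrank F V) :
    Nat.card {N // StrictlyCompatible (rowFlag F v) N ∧ StrictlyCompatible (colFlag F v) N}
      = ∏ c : Fin k × Fin l, (Fintype.card F ^ cornerSum M c.1 c.2) ^ M c.1 c.2 := by
  have hspan : ⊤ ≤ span F (Set.range v) :=
    (blockSpan_eq_top hv hdim).ge.trans (span_mono (Set.image_subset_range _ _))
  let b := Basis.mk hv hspan
  have hcompat (N : V →ₗ[F] V) :
      StrictlyCompatible (rowFlag F v) N ∧ StrictlyCompatible (colFlag F v) N ↔
        ∀ p, N (b p) ∈ blockSpan F v p.1.1 l ⊓ blockSpan F v k p.1.2 := by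
    simp only [strictlyCompatible_rowFlag_colFlag_iff, b, Basis.mk_apply]
  rw [Nat.card_congr (Equiv.subtypeEquivRight hcompat), b.natCard_linearMap_apply_mem,
    Fintype.prod_sigma]
  refine prod_congr rfl fun c _ => ?_
  simp_rw [blockSpan_inf_blockSpan hv, min_eq_left c.1.is_lt.le, min_eq_right c.2.is_lt.le,
    Submodule.natCard_eq_pow_finrank, finrank_blockSpan hv c.1.is_lt.le c.2.is_lt.le, prod_const,
    card_univ, Fintype.card_fin]

theorem cast_natCard_linearIndependent (hdim : cornerSum M k l = finrank F V) :
    (Nat.card {v : Slot k l M → V // LinearIndependent F v} : ℚ)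
      = (Fintype.card F : ℚ) ^ (finrank F V * finrank F V)
        * ((1 - (Fintype.card F : ℚ)⁻¹) ^ finrank F V
          * qFac (Fintype.card F : ℚ)⁻¹ (finrank F V)) := by
  have e := Fintype.equivFinOfCardEq ((card_slot M).trans hdim)
  have hreindex (v : Slot k l M → V) :
      LinearIndependent F v ↔ LinearIndependent F (e.arrowCongr (Equiv.refl V) v) :=
    (linearIndependent_equiv e.symm).symm
  rw [Nat.card_congr ((e.arrowCongr (Equiv.refl V)).subtypeEquiv
      (q := fun w : Fin (finrank F V) → V => LinearIndependent F w) hreindex),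
    card_linearIndependent le_rfl, Fin.prod_univ_eq_prod_range
      (fun s => Fintype.card F ^ finrank F V - Fintype.card F ^ s)]
  simpa using cast_prod_pow_sub_pow Fintype.card_pos 0 (finrank F V)

theorem InRelativePosition.cast_natCard_isAdapted {FF : Fin (k + 1) → Submodule F V}
    {GG : Fin (l + 1) → Submodule F V} (h : InRelativePosition M FF GG) :
    (Nat.card {v : Slot k l M → V // IsAdapted FF GG v} : ℚ)
      = ∏ c : Fin k × Fin l, (Fintype.card F : ℚ) ^ (cornerSum M (c.1 + 1) (c.2 + 1) * M c.1 c.2)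
        * ((1 - (Fintype.card F : ℚ)⁻¹) ^ M c.1 c.2 * qFac (Fintype.card F : ℚ)⁻¹ (M c.1 c.2)) := by
  let e : {v : Slot k l M → V // IsAdapted FF GG v} ≃ ∀ c, {w : Fin (M c.1 c.2) → V //
      (∀ s, w s ∈ cellSpace FF GG c) ∧ LinearIndependent F ((cellBoundary FF GG c).mkQ ∘ w)} :=
    { toFun := fun v c => ⟨fun s => v.1 ⟨c, s⟩, v.2 c⟩
      invFun := fun w => ⟨fun p => (w p.1).1 p.2, fun c => (w c).2⟩
      left_inv := fun _ => rfl
      right_inv := fun _ => rfl }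
  rw [Nat.card_congr e, Nat.card_pi, Nat.cast_prod]
  refine prod_congr rfl fun c _ => ?_
  have hdim := h.finrank_cellBoundary_add c
  rw [card_mem_linearIndependent_mkQ_comp
    (cellBoundary_le_cellSpace h.monotone_left h.monotone_right c) hdim, ← hdim,
    cast_prod_pow_sub_pow Fintype.card_pos, hdim, cellSpace, h.finrank_inf, Fin.val_succ,
    Fin.val_succ]

end Counting

section FlagTriples

variable (F V : Type*) [Field F] [AddCommGroup V] [Module F V]

def FlagTriple (k l : ℕ) (α β : ℕ → ℕ) (M : ℕ → ℕ → ℕ) : Type _ :=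
  {FFN : (Fin (k + 1) → Submodule F V) × (Fin (l + 1) → Submodule F V) × (V →ₗ[F] V) //
    Monotone FFN.1 ∧ FFN.1 0 = ⊥ ∧ FFN.1 (Fin.last k) = ⊤ ∧
    (∀ i : Fin (k + 1), finrank F (FFN.1 i) = ∑ s ∈ range (i : ℕ), α s) ∧
    Monotone FFN.2.1 ∧ FFN.2.1 0 = ⊥ ∧ FFN.2.1 (Fin.last l) = ⊤ ∧
    (∀ j : Fin (l + 1), finrank F (FFN.2.1 j) = ∑ s ∈ range (j : ℕ), β s) ∧
    (∀ i j, finrank F (FFN.1 i ⊓ FFN.2.1 j : Submodule F V) = cornerSum M i j) ∧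
    IsNilpotent FFN.2.2 ∧ StrictlyCompatible FFN.1 FFN.2.2 ∧ StrictlyCompatible FFN.2.1 FFN.2.2}

variable {F V} {k l : ℕ} {α β : ℕ → ℕ} {M : ℕ → ℕ → ℕ}

theorem FlagTriple.inRelativePosition (t : FlagTriple F V k l α β M) :
    InRelativePosition M t.1.1 t.1.2.1 :=
  let ⟨_, hmono, _, hlast, _, hmono', _, hlast', _, hinf, _⟩ := t
  ⟨hmono, hmono', hlast, hlast', hinf⟩

theorem FlagTriple.strictlyCompatible (t : FlagTriple F V k l α β M) :
    StrictlyCompatible t.1.1 t.1.2.2 ∧ StrictlyCompatible t.1.2.1 t.1.2.2 :=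
  t.2.2.2.2.2.2.2.2.2.2.2

variable [FiniteDimensional F V]

def FlagTriple.ofLinearIndependent (hMrow : ∀ i, ∑ j ∈ range l, M i j = α i)
    (hMcol : ∀ j, ∑ i ∈ range k, M i j = β j) (hdim : cornerSum M k l = finrank F V)
    {v : Slot k l M → V} (hv : LinearIndependent F v) {N : V →ₗ[F] V}
    (hN : StrictlyCompatible (rowFlag F v) N ∧ StrictlyCompatible (colFlag F v) N) :
    FlagTriple F V k l α β M :=
  have hzero : rowFlag F v 0 = ⊥ := blockSpan_zero_left v l
  have hlast : rowFlag F v (Fin.last k) = ⊤ := blockSpan_eq_top hv hdim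
  ⟨(rowFlag F v, colFlag F v, N),
    fun _ _ h => blockSpan_mono v h le_rfl, hzero, hlast,
    fun i => (finrank_blockSpan hv i.is_le le_rfl).trans (cornerSum_eq_sum_row hMrow i),
    fun _ _ h => blockSpan_mono v le_rfl h, blockSpan_zero_right v k, blockSpan_eq_top hv hdim,
    fun j => (finrank_blockSpan hv le_rfl j.is_le).trans (cornerSum_eq_sum_col hMcol j),
    fun i j => by rw [rowFlag_inf_colFlag hv, finrank_blockSpan hv i.is_le j.is_le],
    hN.1.isNilpotent hzero hlast, hN⟩

def adaptedEquiv (hMrow : ∀ i, ∑ j ∈ range l, M i j = α i)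
    (hMcol : ∀ j, ∑ i ∈ range k, M i j = β j) (hdim : cornerSum M k l = finrank F V) :
    (Σ t : FlagTriple F V k l α β M, {v : Slot k l M → V // IsAdapted t.1.1 t.1.2.1 v}) ≃
      Σ v : {v : Slot k l M → V // LinearIndependent F v},
        {N // StrictlyCompatible (rowFlag F v.1) N ∧ StrictlyCompatible (colFlag F v.1) N} where
  toFun x := ⟨⟨x.2, x.1.inRelativePosition.linearIndependent x.2.2⟩, x.1.1.2.2, by
    rw [x.1.inRelativePosition.rowFlag_eq x.2.2, x.1.inRelativePosition.colFlag_eq x.2.2]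
    exact x.1.strictlyCompatible⟩
  invFun y :=
    ⟨.ofLinearIndependent hMrow hMcol hdim y.1.2 y.2.2, y.1, isAdapted_rowFlag_colFlag y.1.2⟩
  left_inv x := Sigma.subtype_ext (Subtype.ext (Prod.ext (x.1.inRelativePosition.rowFlag_eq x.2.2)
    (Prod.ext (x.1.inRelativePosition.colFlag_eq x.2.2) rfl))) rfl
  right_inv _ := rfl

end FlagTriples

section MainCount

variable {F V : Type*} [Field F] [Fintype F] [AddCommGroup V] [Module F V] [Finite V]
  {k l : ℕ} {α β : ℕ → ℕ} {M : ℕ → ℕ → ℕ}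

theorem cast_natCard_flagTriple_mul {n : ℕ} (hn : finrank F V = n)
    (hαsum : ∑ i ∈ range k, α i = n) (hMrow : ∀ i, ∑ j ∈ range l, M i j = α i)
    (hMcol : ∀ j, ∑ i ∈ range k, M i j = β j) :
    (Nat.card (FlagTriple F V k l α β M) : ℚ)
      * ((Fintype.card F : ℚ) ^ (∑ i ∈ range k, ∑ j ∈ range l, cornerSum M i j * M i j + n
          + ∑ i ∈ range k, (α i).choose 2 + ∑ j ∈ range l, (β j).choose 2)
        * ((1 - (Fintype.card F : ℚ)⁻¹) ^ n
          * ∏ i ∈ range k, ∏ j ∈ range l, qFac (Fintype.card F : ℚ)⁻¹ (M i j)))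
      = (Fintype.card F : ℚ) ^ (n * n) * ((1 - (Fintype.card F : ℚ)⁻¹) ^ n
          * qFac (Fintype.card F : ℚ)⁻¹ n)
        * (Fintype.card F : ℚ) ^ (∑ i ∈ range k, ∑ j ∈ range l, cornerSum M i j * M i j) := by
  have hdim : cornerSum M k l = finrank F V := by rw [cornerSum_eq_sum_row hMrow, hαsum, hn]
  have : Finite (Submodule F V) := Finite.of_injective _ SetLike.coe_injective
  have : Finite (V →ₗ[F] V) := Finite.of_injective _ DFunLike.coe_injective
  have : Finite (FlagTriple F V k l α β M) := Subtype.finite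
  have : Fintype (FlagTriple F V k l α β M) := Fintype.ofFinite _
  have : Fintype {v : Slot k l M → V // LinearIndependent F v} := Fintype.ofFinite _
  have hN (v : {v : Slot k l M → V // LinearIndependent F v}) :=
    natCard_strictlyCompatible v.2 hdim
  have hA (t : FlagTriple F V k l α β M) := t.inRelativePosition.cast_natCard_isAdapted
  have hcard := congrArg (Nat.cast : ℕ → ℚ) (Nat.card_congr (adaptedEquiv hMrow hMcol hdim))
  simp only [Nat.card_sigma, Nat.cast_sum, hN, hA, sum_const, card_univ, nsmul_eq_mul,
    ← Nat.card_eq_fintype_card (α := FlagTriple F V k l α β M),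
    ← Nat.card_eq_fintype_card (α := {v : Slot k l M → V // LinearIndependent F v})] at hcard
  push_cast at hcard
  have hcells : ∑ i ∈ range k, ∑ j ∈ range l, M i j = n := by simp only [hMrow, hαsum]
  simp only [cast_natCard_linearIndependent hdim, hn, ← pow_mul, prod_mul_distrib,
    prod_pow_eq_pow_sum, sum_cornerSum_succ_mul hMrow hMcol, hαsum, hcells,
    sum_univ_fin_sum_eq_sum_range (fun i j => cornerSum M (i + 1) (j + 1) * M i j),
    sum_univ_fin_sum_eq_sum_range (fun i j => cornerSum M i j * M i j),
    sum_univ_fin_sum_eq_sum_range M,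
    prod_univ_fin_prod_eq_prod_range (fun i j => qFac (Fintype.card F : ℚ)⁻¹ (M i j))] at hcard
  exact hcard

theorem cast_natCard_flagTriple {n : ℕ} (hn : finrank F V = n) (hαsum : ∑ i ∈ range k, α i = n)
    (hMrow : ∀ i, ∑ j ∈ range l, M i j = α i) (hMcol : ∀ j, ∑ i ∈ range k, M i j = β j) :
    (Nat.card (FlagTriple F V k l α β M) : ℚ)
      = ((Fintype.card F : ℚ)⁻¹) ^ (-(n : ℤ) ^ 2 + n
          + (∑ i ∈ range k, (α i).choose 2 : ℕ) + (∑ j ∈ range l, (β j).choose 2 : ℕ))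
        * qFac (Fintype.card F : ℚ)⁻¹ n
        / ∏ i ∈ range k, ∏ j ∈ range l, qFac (Fintype.card F : ℚ)⁻¹ (M i j) := by
  have hcount := cast_natCard_flagTriple_mul hn hαsum hMrow hMcol
  set q : ℚ := (Fintype.card F : ℚ)
  set P := ∏ i ∈ range k, ∏ j ∈ range l, qFac q⁻¹ (M i j)
  set SD := ∑ i ∈ range k, ∑ j ∈ range l, cornerSum M i j * M i j
  set Cα := ∑ i ∈ range k, (α i).choose 2
  set Cβ := ∑ j ∈ range l, (β j).choose 2
  have hq : 1 < q := Nat.one_lt_cast.mpr Fintype.one_lt_card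
  have hP : P ≠ 0 := prod_ne_zero_iff.mpr fun i _ =>
    prod_ne_zero_iff.mpr fun j _ => (qFac_pos (by positivity) _).ne'
  have hpow : q⁻¹ ^ (-(n : ℤ) ^ 2 + n + Cα + Cβ) * q ^ (SD + n + Cα + Cβ)
      = q ^ (n * n) * q ^ SD := by
    simp only [inv_zpow', ← zpow_natCast, ← zpow_add₀ (by positivity : q ≠ 0)]
    congr 1
    push_cast
    ring
  rw [eq_div_iff hP]
  refine mul_right_cancel₀ (b := q ^ (SD + n + Cα + Cβ) * (1 - q⁻¹) ^ n) ?_ ?_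
  · exact mul_ne_zero (by positivity)
      (pow_ne_zero _ (sub_ne_zero.mpr (inv_lt_one_of_one_lt₀ hq).ne'))
  · linear_combination hcount - ((1 - q⁻¹) ^ n * qFac q⁻¹ n) * hpow

end MainCount

theorem stmt_19_general (F : Type*) [Field F] [Fintype F] (n k l : ℕ) (α β : ℕ → ℕ)
    (hαsum : ∑ i ∈ Finset.range k, α i = n)
    (M : ℕ → ℕ → ℕ)
    (hMrow : ∀ i, ∑ j ∈ Finset.range l, M i j = α i)
    (hMcol : ∀ j, ∑ i ∈ Finset.range k, M i j = β j) :
    (Nat.card {FFN : (Fin (k + 1) → Submodule F (Fin n → F))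
        × (Fin (l + 1) → Submodule F (Fin n → F))
        × ((Fin n → F) →ₗ[F] (Fin n → F)) //
        Monotone FFN.1 ∧ FFN.1 0 = ⊥ ∧ FFN.1 (Fin.last k) = ⊤ ∧
        (∀ i : Fin (k + 1),
          Module.finrank F (FFN.1 i) = ∑ s ∈ Finset.range (i : ℕ), α s) ∧
        Monotone FFN.2.1 ∧ FFN.2.1 0 = ⊥ ∧ FFN.2.1 (Fin.last l) = ⊤ ∧
        (∀ j : Fin (l + 1),
          Module.finrank F (FFN.2.1 j) = ∑ s ∈ Finset.range (j : ℕ), β s) ∧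
        (∀ (i : Fin (k + 1)) (j : Fin (l + 1)),
          Module.finrank F ((FFN.1 i ⊓ FFN.2.1 j : Submodule F (Fin n → F)))
            = ∑ i' ∈ Finset.range (i : ℕ), ∑ j' ∈ Finset.range (j : ℕ), M i' j') ∧
        IsNilpotent FFN.2.2 ∧
        (∀ i : Fin k, ∀ x ∈ FFN.1 i.succ, FFN.2.2 x ∈ FFN.1 i.castSucc) ∧
        (∀ j : Fin l, ∀ x ∈ FFN.2.1 j.succ, FFN.2.2 x ∈ FFN.2.1 j.castSucc)} : ℚ)
      = ((Fintype.card F : ℚ)⁻¹)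
          ^ (-(n : ℤ) ^ 2 + n
              + (∑ i ∈ Finset.range k, Nat.choose (α i) 2 : ℕ)
              + (∑ j ∈ Finset.range l, Nat.choose (β j) 2 : ℕ))
        * qFac (Fintype.card F : ℚ)⁻¹ n
        / ∏ i ∈ Finset.range k, ∏ j ∈ Finset.range l,
            qFac (Fintype.card F : ℚ)⁻¹ (M i j) := by
  exact cast_natCard_flagTriple (Module.finrank_fin_fun F) hαsum hMrow hMcol

/-- Let `α, β` be weak compositions of `n` with `k, l` parts and `M` a `k × l`
nonnegative-integer matrix with row sums `α` and column sums `β`.  Over `F_q` with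
`t = 1/q`, the number of triples `(F, F', N)` — `F` a partial flag of type `α`, `F'` a
partial flag of type `β`, `(F, F')` of relative position `M` (i.e.
`dim(F_i ∩ F'_j) = ∑_{i'≤i, j'≤j} M_{i',j'}`), and `N` a nilpotent endomorphism strictly
compatible with both — equals
`t^{−n² + n + n(α) + n(β)} · [n]_t! / ∏_{i,j} [M_{i,j}]_t!`,
where `n(γ) = ∑_i C(γ_i, 2)`. -/
theorem stmt_19 (F : Type*) [Field F] [Fintype F] (n k l : ℕ) (α β : ℕ → ℕ)
    (hαsupp : ∀ i, k ≤ i → α i = 0) (hαsum : ∑ i ∈ Finset.range k, α i = n)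
    (hβsupp : ∀ j, l ≤ j → β j = 0) (hβsum : ∑ j ∈ Finset.range l, β j = n)
    (M : ℕ → ℕ → ℕ) (hMsupp : ∀ i j, k ≤ i ∨ l ≤ j → M i j = 0)
    (hMrow : ∀ i, ∑ j ∈ Finset.range l, M i j = α i)
    (hMcol : ∀ j, ∑ i ∈ Finset.range k, M i j = β j) :
    (Nat.card {FFN : (Fin (k + 1) → Submodule F (Fin n → F))
        × (Fin (l + 1) → Submodule F (Fin n → F))
        × ((Fin n → F) →ₗ[F] (Fin n → F)) //
        Monotone FFN.1 ∧ FFN.1 0 = ⊥ ∧ FFN.1 (Fin.last k) = ⊤ ∧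
        (∀ i : Fin (k + 1),
          Module.finrank F (FFN.1 i) = ∑ s ∈ Finset.range (i : ℕ), α s) ∧
        Monotone FFN.2.1 ∧ FFN.2.1 0 = ⊥ ∧ FFN.2.1 (Fin.last l) = ⊤ ∧
        (∀ j : Fin (l + 1),
          Module.finrank F (FFN.2.1 j) = ∑ s ∈ Finset.range (j : ℕ), β s) ∧
        (∀ (i : Fin (k + 1)) (j : Fin (l + 1)),
          Module.finrank F ((FFN.1 i ⊓ FFN.2.1 j : Submodule F (Fin n → F)))
            = ∑ i' ∈ Finset.range (i : ℕ), ∑ j' ∈ Finset.range (j : ℕ), M i' j') ∧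
        IsNilpotent FFN.2.2 ∧
        (∀ i : Fin k, ∀ x ∈ FFN.1 i.succ, FFN.2.2 x ∈ FFN.1 i.castSucc) ∧
        (∀ j : Fin l, ∀ x ∈ FFN.2.1 j.succ, FFN.2.2 x ∈ FFN.2.1 j.castSucc)} : ℚ)
      = ((Fintype.card F : ℚ)⁻¹)
          ^ (-(n : ℤ) ^ 2 + n
              + (∑ i ∈ Finset.range k, Nat.choose (α i) 2 : ℕ)
              + (∑ j ∈ Finset.range l, Nat.choose (β j) 2 : ℕ))
        * qFac (Fintype.card F : ℚ)⁻¹ n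
        / ∏ i ∈ Finset.range k, ∏ j ∈ Finset.range l,
            qFac (Fintype.card F : ℚ)⁻¹ (M i j) :=
  stmt_19_general F n k l α β hαsum M hMrow hMcol
end
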